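/- arXiv:math/0509620 — 9 statements merged into one kernel-verified Lean document; each statement's English description precedes it below -/
import Mathlib

section
/- Let S be a finite metric space whose isometry group acts transitively, let C ⊆ S be a code with minimum distance d (all pairwise distances of distinct codewords are ≥ d), and let A ⊆ S be a nonempty anticode of diameter D < d (all pairwise distances in A are ≤ D). Then |C| · |A| ≤ |S|. -/
open Finset

/-- In a finite metric space `S` with a transitive isometry group, if `C` is a
code with minimum distance `d` (at least 2 codewords, pairwise distances of distinct
codewords ≥ d) and `A` is a nonempty anticode of diameter `D < d` (pairwise distances ≤ D),
then `|C| · |A| ≤ |S|`. -/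
theorem stmt1 {S : Type*} [MetricSpace S] [Fintype S]
    (htrans : ∀ x y : S, ∃ e : S ≃ᵢ S, e x = y)
    (d D : ℝ) (hDd : D < d)
    (C A : Finset S) (hC2 : 2 ≤ C.card) (hA : A.Nonempty)
    (hC : ∀ x ∈ C, ∀ y ∈ C, x ≠ y → d ≤ dist x y)
    (hAdiam : ∀ x ∈ A, ∀ y ∈ A, dist x y ≤ D) :
    C.card * A.card ≤ Fintype.card S := by
  classical
  haveI : Fintype (S ≃ᵢ S) :=
    Fintype.ofInjective (fun e : S ≃ᵢ S => (e : S → S)) (fun a b h => by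
      ext x; exact congrFun h x)
  -- all fibers of evaluation at `a` have the same size (by transitivity)
  have fib : ∀ (a c : S), ((univ : Finset (S ≃ᵢ S)).filter (fun g => g a = c)).card
      = ((univ : Finset (S ≃ᵢ S)).filter (fun g => g a = a)).card := by
    intro a c
    obtain ⟨e, he⟩ := htrans a c
    refine Finset.card_bij (fun g _ => g.trans e.symm) ?_ ?_ ?_
    · intro g hg
      simp only [mem_filter, mem_univ, true_and] at hg ⊢
      rw [IsometryEquiv.trans_apply, hg, ← he, e.symm_apply_apply]
    · intro g hg g' hg' h
      refine IsometryEquiv.ext (fun x => e.symm.injective ?_)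
      have := congrArg (fun t : S ≃ᵢ S => t x) h
      simpa using this
    · intro h hh
      simp only [mem_filter, mem_univ, true_and] at hh
      refine ⟨h.trans e, ?_, ?_⟩
      · simp only [mem_filter, mem_univ, true_and, IsometryEquiv.trans_apply, hh, he]
      · ext x
        simp
  -- the order of the isometry group is |S| * |Stab a| for every a
  have hG : ∀ a : S, Fintype.card (S ≃ᵢ S)
      = Fintype.card S * ((univ : Finset (S ≃ᵢ S)).filter (fun g => g a = a)).card := by
    intro a
    have h1 := Finset.card_eq_sum_card_fiberwise (s := (univ : Finset (S ≃ᵢ S)))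
      (t := (univ : Finset S)) (f := fun g => g a) (fun x _ => mem_univ _)
    rw [Finset.card_univ] at h1
    rw [h1, Finset.sum_congr rfl (fun c _ => fib a c), Finset.sum_const, smul_eq_mul,
      Finset.card_univ]
  -- each translate of A meets C in at most one point
  have hT : ∀ g : S ≃ᵢ S, (A.filter (fun a => g a ∈ C)).card ≤ 1 := by
    intro g
    refine Finset.card_le_one.2 ?_
    intro a ha b hb
    simp only [mem_filter] at ha hb
    by_contra hne
    have hgne : g a ≠ g b := fun h => hne (g.injective h)
    have hd : d ≤ dist (g a) (g b) := hC _ ha.2 _ hb.2 hgne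
    rw [g.isometry.dist_eq] at hd
    exact absurd (le_trans hd (hAdiam _ ha.1 _ hb.1)) (not_le.2 hDd)
  set N : ℕ := ∑ g : S ≃ᵢ S, (A.filter (fun a => g a ∈ C)).card with hN
  have hNle : N ≤ Fintype.card (S ≃ᵢ S) := by
    calc N ≤ ∑ _g : S ≃ᵢ S, 1 := Finset.sum_le_sum (fun g _ => hT g)
    _ = Fintype.card (S ≃ᵢ S) := by simp
  have hNeq : N = ∑ a ∈ A, ((univ : Finset (S ≃ᵢ S)).filter (fun g => g a ∈ C)).card := by
    rw [hN]
    simp_rw [Finset.card_filter]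
    exact Finset.sum_comm
  have hfiber : ∀ a : S, ((univ : Finset (S ≃ᵢ S)).filter (fun g => g a ∈ C)).card
      = C.card * ((univ : Finset (S ≃ᵢ S)).filter (fun g => g a = a)).card := by
    intro a
    have h1 := Finset.card_eq_sum_card_fiberwise
      (s := (univ : Finset (S ≃ᵢ S)).filter (fun g => g a ∈ C))
      (t := C) (f := fun g => g a) (fun x hx => (mem_filter.1 hx).2)
    rw [h1]
    have h2 : ∀ c ∈ C, (((univ : Finset (S ≃ᵢ S)).filter (fun g => g a ∈ C)).filter
        (fun g => g a = c)).card
        = ((univ : Finset (S ≃ᵢ S)).filter (fun g => g a = a)).card := by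
      intro c hc
      rw [Finset.filter_filter]
      rw [Finset.filter_congr (fun g _ => show (g a ∈ C ∧ g a = c) ↔ (g a = c) from
        ⟨fun h => h.2, fun h => ⟨h ▸ hc, h⟩⟩)]
      exact fib a c
    rw [Finset.sum_congr rfl h2, Finset.sum_const, smul_eq_mul]
  -- Combine: N * |S| = |A| * |C| * |G|
  have hmain : A.card * C.card * Fintype.card (S ≃ᵢ S) = N * Fintype.card S := by
    rw [hNeq, Finset.sum_mul]
    have : ∀ a ∈ A, ((univ : Finset (S ≃ᵢ S)).filter (fun g => g a ∈ C)).card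
        * Fintype.card S = C.card * Fintype.card (S ≃ᵢ S) := by
      intro a _
      rw [hfiber a, hG a]; ring
    rw [Finset.sum_congr rfl this, Finset.sum_const, smul_eq_mul]
    ring
  have hGpos : 0 < Fintype.card (S ≃ᵢ S) :=
    Fintype.card_pos_iff.2 ⟨IsometryEquiv.refl S⟩
  have : A.card * C.card * Fintype.card (S ≃ᵢ S)
      ≤ Fintype.card S * Fintype.card (S ≃ᵢ S) := by
    rw [hmain]
    calc N * Fintype.card S ≤ Fintype.card (S ≃ᵢ S) * Fintype.card S :=
      Nat.mul_le_mul_right _ hNle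
    _ = Fintype.card S * Fintype.card (S ≃ᵢ S) := Nat.mul_comm _ _
  have h2 := Nat.le_of_mul_le_mul_right this hGpos
  calc C.card * A.card = A.card * C.card := Nat.mul_comm _ _
  _ ≤ Fintype.card S := h2
end

section
/- For n ≥ 4, the set B_z = { y ∈ X^n : d_H(y,z) ≤ 1 }, for z ∈ {0,1,*}^n with at most one *, is a maximal anticode of diameter 2 in X^n: no subset of X^n of diameter ≤ 2 properly contains B_z. -/
open Finset

/-- Ternary words of length `n` over `{0,1,*}`, with `none` playing the role of `*`. -/
abbrev TW (n : ℕ) := Fin n → Option (ZMod 2)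

/-- Membership in `X^n`: exactly one coordinate equals `*`. -/
def isX {n : ℕ} (w : TW n) : Prop := (Finset.univ.filter (fun i => w i = none)).card = 1

lemma exists_ne3 {n : ℕ} (hn : 4 ≤ n) (x y w : Fin n) :
    ∃ k : Fin n, k ≠ x ∧ k ≠ y ∧ k ≠ w := by
  have hcard : ({x, y, w} : Finset (Fin n)).card ≤ 3 := by
    apply le_trans (Finset.card_insert_le _ _)
    have := Finset.card_insert_le y ({w} : Finset (Fin n))
    simp at this ⊢; omega
  have hne : ((univ : Finset (Fin n)) \ {x, y, w}).Nonempty := by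
    rw [← Finset.card_pos, Finset.card_sdiff_of_subset (Finset.subset_univ _)]
    simp only [Finset.card_univ, Fintype.card_fin]
    omega
  obtain ⟨k, hk⟩ := hne
  simp only [Finset.mem_sdiff, Finset.mem_insert, Finset.mem_singleton] at hk
  exact ⟨k, by tauto, by tauto, by tauto⟩

lemma ham_eq {n : ℕ} (x y : TW n) :
    hammingDist x y = (univ.filter fun i => x i ≠ y i).card := rfl

lemma three_le {n : ℕ} (x y : TW n) (i j k : Fin n)
    (hij : i ≠ j) (hik : i ≠ k) (hjk : j ≠ k)
    (hi : x i ≠ y i) (hj : x j ≠ y j) (hk : x k ≠ y k) :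
    3 ≤ hammingDist x y := by
  rw [ham_eq]
  refine Finset.two_lt_card.mpr ⟨i, ?_, j, ?_, k, ?_, hij, hik, hjk⟩ <;>
    simp [hi, hj, hk]

lemma flip_ne (v : ZMod 2) : some (v + 1) ≠ some v := by
  intro h
  have : v + 1 = v := Option.some_injective _ h
  simpa using this

/-- for `n ≥ 4` and `z ∈ {0,1,*}^n` with at most one `*`, the ball
`B_z = { y ∈ X^n : d_H(y,z) ≤ 1 }` is a maximal diameter-2 anticode in `X^n`:
any subset of `X^n` of diameter ≤ 2 containing `B_z` equals `B_z`. -/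
theorem stmt5 {n : ℕ} (hn : 4 ≤ n) (z : TW n)
    (hz : (Finset.univ.filter (fun i => z i = none)).card ≤ 1)
    (A : Set (TW n)) (hAX : ∀ a ∈ A, isX a)
    (hdiam : ∀ a ∈ A, ∀ b ∈ A, hammingDist a b ≤ 2)
    (hsub : {y : TW n | isX y ∧ hammingDist y z ≤ 1} ⊆ A) :
    A = {y : TW n | isX y ∧ hammingDist y z ≤ 1} := by
  apply Set.Subset.antisymm _ hsub
  intro a haA
  have haX := hAX a haA
  obtain ⟨q, hq⟩ := Finset.card_eq_one.mp haX
  have haq : a q = none := by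
    have : q ∈ Finset.univ.filter (fun i => a i = none) := by
      rw [hq]; exact Finset.mem_singleton_self q
    simpa using this
  have hane : ∀ i, i ≠ q → a i ≠ none := by
    intro i hi hcon
    have : i ∈ ({q} : Finset (Fin n)) := by
      rw [← hq]; simp [hcon]
    exact hi (Finset.mem_singleton.mp this)
  refine ⟨haX, ?_⟩
  rw [ham_eq]
  interval_cases hzc : (Finset.univ.filter (fun i => z i = none)).card
  · -- z has no star
    have hzne : ∀ i, z i ≠ none := by
      intro i hcon
      have : i ∈ Finset.univ.filter (fun i => z i = none) := by simp [hcon]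
      rw [Finset.card_eq_zero.mp hzc] at this
      simp at this
    -- every coordinate other than q agrees
    have hagree : ∀ i, i ≠ q → a i = z i := by
      intro i hiq
      by_contra hne
      obtain ⟨k, hkq, hki, -⟩ := exists_ne3 hn q i i
      set y : TW n := Function.update z k none with hy
      have hyX : isX y := by
        unfold isX
        have : (Finset.univ.filter (fun m => y m = none)) = {k} := by
          ext m
          simp only [Finset.mem_filter, Finset.mem_univ, true_and, Finset.mem_singleton, hy]
          constructor
          · intro hm
            by_contra hmk
            rw [Function.update_of_ne hmk] at hm
            exact hzne m hm
          · intro hm; subst hm; simp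
        rw [this]; simp
      have hyz : hammingDist y z ≤ 1 := by
        rw [ham_eq]
        have : (Finset.univ.filter (fun m => y m ≠ z m)) ⊆ {k} := by
          intro m hm
          simp only [Finset.mem_filter, Finset.mem_univ, true_and, hy] at hm
          by_contra hmk
          simp only [Finset.mem_singleton] at hmk
          rw [Function.update_of_ne hmk] at hm
          exact hm rfl
        calc _ ≤ ({k} : Finset (Fin n)).card := Finset.card_le_card this
        _ = 1 := by simp
      have hyA : y ∈ A := hsub ⟨hyX, hyz⟩
      have h3 : 3 ≤ hammingDist a y := by
        apply three_le a y q i k hiq.symm hkq.symm hki.symm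
        · rw [haq, hy, Function.update_of_ne (fun h => hkq h.symm)]
          exact fun h => hzne q h.symm
        · rw [hy, Function.update_of_ne (fun h => hki h.symm)]
          exact hne
        · rw [hy]; simp only [Function.update_self]
          exact hane k hkq
      have := hdiam a haA y hyA
      omega
    have : (Finset.univ.filter (fun i => a i ≠ z i)) ⊆ {q} := by
      intro i hi
      simp only [Finset.mem_filter, Finset.mem_univ, true_and] at hi
      simp only [Finset.mem_singleton]
      by_contra hiq
      exact hi (hagree i hiq)
    calc _ ≤ ({q} : Finset (Fin n)).card := Finset.card_le_card this
    _ = 1 := by simp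
  · -- z has one star, at p
    obtain ⟨p, hp⟩ := Finset.card_eq_one.mp hzc
    have hzp : z p = none := by
      have : p ∈ Finset.univ.filter (fun i => z i = none) := by
        rw [hp]; exact Finset.mem_singleton_self p
      simpa using this
    have hzne : ∀ i, i ≠ p → z i ≠ none := by
      intro i hi hcon
      have : i ∈ ({p} : Finset (Fin n)) := by rw [← hp]; simp [hcon]
      exact hi (Finset.mem_singleton.mp this)
    have hzX : isX z := hzc
    have hzA : z ∈ A := hsub ⟨hzX, by simp⟩
    have haz2 : hammingDist a z ≤ 2 := hdiam a haA z hzA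
    rw [ham_eq] at haz2
    -- flip construction: for k ≠ p with a k = z k, flipping z at k gives a member of B_z
    have flipmem : ∀ k, k ≠ p → ∀ y : TW n,
        (y = fun m => if m = k then Option.map (· + 1) (z k) else z m) → y ∈ A := by
      intro k hkp y hy
      obtain ⟨v, hv⟩ := Option.ne_none_iff_exists'.mp (hzne k hkp)
      have hykv : y k = some (v + 1) := by rw [hy]; simp [hv]
      have hyX : isX y := by
        unfold isX
        have : (Finset.univ.filter (fun m => y m = none)) = {p} := by
          ext m
          simp only [Finset.mem_filter, Finset.mem_univ, true_and, Finset.mem_singleton]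
          constructor
          · intro hm
            by_contra hmp
            rcases eq_or_ne m k with rfl | hmk
            · rw [hykv] at hm; exact Option.some_ne_none _ hm
            · rw [hy] at hm; simp only [if_neg hmk] at hm
              exact hzne m hmp hm
          · intro hm
            rw [hy, hm]
            simp only [if_neg (fun h : p = k => hkp h.symm)]
            exact hzp
        rw [this]; simp
      have hyz : hammingDist y z ≤ 1 := by
        rw [ham_eq]
        have : (Finset.univ.filter (fun m => y m ≠ z m)) ⊆ {k} := by
          intro m hm
          simp only [Finset.mem_filter, Finset.mem_univ, true_and] at hm
          by_contra hmk
          simp only [Finset.mem_singleton] at hmk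
          rw [hy] at hm; simp only [if_neg hmk] at hm
          exact hm rfl
        calc _ ≤ ({k} : Finset (Fin n)).card := Finset.card_le_card this
        _ = 1 := by simp
      exact hsub ⟨hyX, hyz⟩
    rcases eq_or_ne q p with rfl | hqp
    · -- star of a and z at same place q = p
      by_contra hcard
      push_neg at hcard
      obtain ⟨i, hi, j, hj, hij⟩ := Finset.one_lt_card.mp hcard
      simp only [Finset.mem_filter, Finset.mem_univ, true_and] at hi hj
      have hiq : i ≠ q := by rintro rfl; exact hi (haq.trans hzp.symm)
      have hjq : j ≠ q := by rintro rfl; exact hj (haq.trans hzp.symm)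
      obtain ⟨k, hkq, hki, hkj⟩ := exists_ne3 hn q i j
      -- k not in difference set: D = {i,j}
      have hD : (Finset.univ.filter (fun m => a m ≠ z m)) = {i, j} := by
        apply Finset.eq_of_superset_of_card_ge
        · intro m hm
          simp only [Finset.mem_insert, Finset.mem_singleton] at hm
          rcases hm with rfl | rfl <;> simp [hi, hj]
        · have : ({i, j} : Finset (Fin n)).card = 2 := by
            rw [Finset.card_insert_of_notMem (by simpa using hij)]; simp
          omega
      have hak : a k = z k := by
        by_contra hne
        have : k ∈ ({i, j} : Finset (Fin n)) := by rw [← hD]; simp [hne]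
        simp only [Finset.mem_insert, Finset.mem_singleton] at this
        rcases this with rfl | rfl
        · exact hki rfl
        · exact hkj rfl
      obtain ⟨v, hv⟩ := Option.ne_none_iff_exists'.mp (hzne k hkq)
      set y : TW n := fun m => if m = k then Option.map (· + 1) (z k) else z m with hy
      have hyA : y ∈ A := flipmem k hkq y hy
      have h3 : 3 ≤ hammingDist a y := by
        apply three_le a y i j k hij hki.symm hkj.symm
        · rw [hy]; simp only [if_neg (fun h : i = k => hki h.symm)]; exact hi
        · rw [hy]; simp only [if_neg (fun h : j = k => hkj h.symm)]; exact hj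
        · rw [hy]; simp only [if_pos rfl, hv, hak]
          simpa [hv] using flip_ne v
      have := hdiam a haA y hyA
      omega
    · -- stars in different places: impossible
      exfalso
      have hpD : a p ≠ z p := by rw [hzp]; exact hane p (fun h => hqp h.symm)
      have hqD : a q ≠ z q := by rw [haq]; exact fun h => hzne q hqp h.symm
      obtain ⟨k, hkp, hkq, -⟩ := exists_ne3 hn p q q
      have hak : a k = z k := by
        by_contra hne
        have h3 : 3 ≤ hammingDist a z := three_le a z p q k hqp.symm hkp.symm hkq.symm hpD hqD hne
        rw [ham_eq] at h3
        omega
      obtain ⟨v, hv⟩ := Option.ne_none_iff_exists'.mp (hzne k hkp)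
      set y : TW n := fun m => if m = k then Option.map (· + 1) (z k) else z m with hy
      have hyA : y ∈ A := flipmem k hkp y hy
      have h3 : 3 ≤ hammingDist a y := by
        apply three_le a y p q k hqp.symm hkp.symm hkq.symm
        · rw [hy]; simp only [if_neg (fun h : p = k => hkp h.symm)]; exact hpD
        · rw [hy]; simp only [if_neg (fun h : q = k => hkq h.symm)]; exact hqD
        · rw [hy]; simp only [if_pos rfl, hv, hak]
          simpa [hv] using flip_ne v
      have := hdiam a haA y hyA
      omega
end

section
/- If C ⊆ X^n is a perfect distance-3 code (equivalently, a code of minimum distance 3 and cardinality 2^{n-1}, so that the radius-1 balls around codewords partition X^n), then n = 2^m for some integer m ≥ 2. -/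
/-!
Two words at distance at most 1 have their `*` in the same position, so the radius-1 ball of a
codeword stays inside its page (the `2^(n-1)` words with `*` at a fixed position) and consists of
the codeword and its `n - 1` one-bit flips. The balls of the codewords on a page are disjoint, so
each page carries at most `2^(n-1) / n` codewords; as there are `n` pages and `2^(n-1)` codewords,
every page carries exactly that many. Hence `n ∣ 2^(n-1)`, and `n ≥ 3` because two codewords are
at distance at least 3.
-/

namespace StarWord

variable {ι : Type*} [DecidableEq ι]

def page [Fintype ι] (p : ι) : Finset (ι → Option (ZMod 2)) :=
  Fintype.piFinset fun i => if i = p then {none} else Finset.univ.erase none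

section page

variable [Fintype ι] {p q : ι} {w : ι → Option (ZMod 2)}

lemma mem_page : w ∈ page p ↔ ∀ i, w i = none ↔ i = p := by
  simp only [page, Fintype.mem_piFinset]
  refine forall_congr' fun i => ?_
  split_ifs with h <;> simp [h]

lemma card_page (p : ι) : (page p).card = 2 ^ (Fintype.card ι - 1) := by
  simp [page, Fintype.card_piFinset, apply_ite, Finset.prod_ite, Finset.filter_ne',
    Finset.card_erase_of_mem]

lemma disjoint_page (h : p ≠ q) : Disjoint (page p) (page q) :=
  Finset.disjoint_left.2 fun _ hp hq => h <| (mem_page.1 hq p).1 ((mem_page.1 hp p).2 rfl)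

lemma card_eq_sum_card_filter_mem_page {S : Finset (ι → Option (ZMod 2))}
    (hS : ∀ w ∈ S, ∃ p, w ∈ page p) : S.card = ∑ p, (S.filter (· ∈ page p)).card := by
  rw [← Finset.card_biUnion (t := fun p => S.filter (· ∈ page p)) fun p _ q _ h =>
    Finset.disjoint_filter.2 fun _ _ hp hq => Finset.disjoint_left.1 (disjoint_page h) hp hq]
  congr 1
  ext w
  simpa using fun hw => hS w hw

end page

def flipAt (w : ι → Option (ZMod 2)) (i : ι) : ι → Option (ZMod 2) :=
  Function.update w i ((w i).map (· + 1))

section flipAt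

variable {w : ι → Option (ZMod 2)} {i j : ι}

lemma flipAt_eq_none_iff : flipAt w i j = none ↔ w j = none := by
  rcases eq_or_ne j i with rfl | h
  · simp [flipAt]
  · simp [flipAt, h]

lemma flipAt_self_ne (h : w i ≠ none) : flipAt w i i ≠ w i := by
  obtain ⟨a, ha⟩ := Option.ne_none_iff_exists'.1 h
  simp [flipAt, ha]

lemma hammingDist_flipAt_le [Fintype ι] (w : ι → Option (ZMod 2)) (i : ι) :
    hammingDist w (flipAt w i) ≤ 1 := by
  refine (Finset.card_le_card fun j hj => ?_).trans (Finset.card_singleton i).le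
  by_contra h
  exact (Finset.mem_filter.1 hj).2
    (by simp [flipAt, Function.update_of_ne (Finset.mem_singleton.not.1 h)])

variable [Fintype ι] {p : ι}

lemma flipAt_mem_page (hw : w ∈ page p) (i : ι) : flipAt w i ∈ page p :=
  mem_page.2 fun j => flipAt_eq_none_iff.trans (mem_page.1 hw j)

lemma flipAt_injective (hw : w ∈ page p) : Function.Injective (flipAt w) := by
  have key : ∀ {i j}, i ≠ j → w i ≠ none → flipAt w i ≠ flipAt w j := fun hij hi h =>
    flipAt_self_ne hi (by rw [h, flipAt, Function.update_of_ne hij])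
  intro i j h
  by_contra hij
  by_cases hi : i = p
  · exact key (Ne.symm hij) (fun hj => hij (hi.trans ((mem_page.1 hw j).1 hj).symm)) h.symm
  · exact key hij (fun h' => hi ((mem_page.1 hw i).1 h')) h

end flipAt

variable [Fintype ι]

/-- As `flipAt c p = c` at the star `p` of `c`, this is `c` together with its `n - 1` neighbours. -/
def ball (c : ι → Option (ZMod 2)) : Finset (ι → Option (ZMod 2)) :=
  Finset.univ.image (flipAt c)

lemma card_ball {p : ι} {c : ι → Option (ZMod 2)} (hc : c ∈ page p) :
    (ball c).card = Fintype.card ι :=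
  Finset.card_image_of_injective _ (flipAt_injective hc)

lemma ball_subset_page {p : ι} {c : ι → Option (ZMod 2)} (hc : c ∈ page p) :
    ball c ⊆ page p := by
  simpa [ball, Finset.image_subset_iff] using flipAt_mem_page hc

lemma disjoint_ball {c c' : ι → Option (ZMod 2)} (h : 3 ≤ hammingDist c c') :
    Disjoint (ball c) (ball c') := by
  simp only [ball, Finset.disjoint_left, Finset.mem_image, Finset.mem_univ, true_and]
  rintro _ ⟨i, rfl⟩ ⟨j, hj⟩
  have := calc
    hammingDist c c' ≤ hammingDist c (flipAt c i) + hammingDist (flipAt c i) c' :=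
      hammingDist_triangle _ _ _
    _ ≤ 1 + 1 := add_le_add (hammingDist_flipAt_le c i)
      (by rw [← hj, hammingDist_comm]; exact hammingDist_flipAt_le c' j)
  omega

lemma card_mul_le_of_subset_page {p : ι} {S : Finset (ι → Option (ZMod 2))} (hS : S ⊆ page p)
    (hd : (S : Set (ι → Option (ZMod 2))).Pairwise fun c c' => 3 ≤ hammingDist c c') :
    S.card * Fintype.card ι ≤ 2 ^ (Fintype.card ι - 1) :=
  calc S.card * Fintype.card ι = (S.biUnion ball).card := by
        rw [Finset.card_biUnion fun c hc c' hc' h => disjoint_ball (hd hc hc' h),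
          Finset.sum_const_nat fun c hc => card_ball (hS hc)]
    _ ≤ (page p).card :=
        Finset.card_le_card (Finset.biUnion_subset.2 fun c hc => ball_subset_page (hS hc))
    _ = 2 ^ (Fintype.card ι - 1) := card_page p

theorem card_dvd_two_pow_of_perfect [Nonempty ι] {C : Finset (ι → Option (ZMod 2))}
    (hX : ∀ c ∈ C, ∃ p, c ∈ page p)
    (hd : (C : Set (ι → Option (ZMod 2))).Pairwise fun c c' => 3 ≤ hammingDist c c')
    (hcard : C.card = 2 ^ (Fintype.card ι - 1)) :
    Fintype.card ι ∣ 2 ^ (Fintype.card ι - 1) := by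
  obtain ⟨p⟩ := ‹Nonempty ι›
  have hle : ∀ q ∈ Finset.univ, (C.filter (· ∈ page q)).card * Fintype.card ι ≤
      2 ^ (Fintype.card ι - 1) := fun q _ =>
    card_mul_le_of_subset_page (fun c hc => (Finset.mem_filter.1 hc).2)
      (hd.mono (Finset.coe_subset.2 (Finset.filter_subset _ _)))
  have hsum : ∑ q, (C.filter (· ∈ page q)).card * Fintype.card ι =
      ∑ _q : ι, 2 ^ (Fintype.card ι - 1) := by
    rw [← Finset.sum_mul, ← card_eq_sum_card_filter_mem_page hX, hcard, Finset.sum_const,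
      Finset.card_univ, smul_eq_mul, mul_comm]
  exact Dvd.intro_left _ ((Finset.sum_eq_sum_iff_of_le hle).1 hsum p (Finset.mem_univ p))

lemma isX_iff_exists_mem_page {n : ℕ} {w : TW n} : isX w ↔ ∃ p, w ∈ page p := by
  simp only [isX, Finset.card_eq_one, mem_page, Finset.ext_iff, Finset.mem_filter,
    Finset.mem_univ, true_and, Finset.mem_singleton]

end StarWord

open StarWord

/-- if `C ⊆ X^n` is a perfect distance-3 code (minimum distance 3 and
cardinality `2^(n-1)`), then `n = 2^m` for some `m ≥ 2`. -/
theorem stmt6 {n : ℕ} (C : Finset (TW n)) (hX : ∀ c ∈ C, isX c)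
    (hC2 : 2 ≤ C.card)
    (hd : ∀ c ∈ C, ∀ c' ∈ C, c ≠ c' → 3 ≤ hammingDist c c')
    (hcard : C.card = 2 ^ (n - 1)) :
    ∃ m : ℕ, 2 ≤ m ∧ n = 2 ^ m := by
  obtain ⟨a, ha, b, hb, hab⟩ := Finset.one_lt_card.1 hC2
  have hn : 3 ≤ n :=
    (hd a ha b hb hab).trans (by simpa using hammingDist_le_card_fintype (x := a) (y := b))
  have : Nonempty (Fin n) := ⟨⟨0, by omega⟩⟩
  have hdvd : n ∣ 2 ^ (n - 1) := by
    simpa using card_dvd_two_pow_of_perfect (fun c hc => isX_iff_exists_mem_page.1 (hX c hc))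
      (fun c hc c' hc' => hd c hc c' hc') (by simpa using hcard)
  obtain ⟨m, -, rfl⟩ := (Nat.dvd_prime_pow Nat.prime_two).1 hdvd
  exact ⟨m, (Nat.pow_lt_pow_iff_right (by norm_num)).1 (by omega : 2 ^ 1 < 2 ^ m), rfl⟩
end

section
/- A set C ⊆ X^n has minimum distance 3 and cardinality 2^{n-1} (i.e., is a perfect distance-3 code) if and only if the corresponding set M = χ^{-1}(C) of edges of the hypercube {0,1}^n is a perfect matching in which no two distinct parallel edges are at distance 1 or 2 from each other. -/
/-- Binary words of length `n`. -/
abbrev BW (n : ℕ) := Fin n → ZMod 2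

/-- Embedding of binary words into ternary words. -/
def emb {n : ℕ} (x : BW n) : TW n := fun i => some (x i)

/-!
For `c ∈ X^n`, a binary word `v` is an endpoint of `χ⁻¹(c)` iff it agrees with `c` off the star,
so the two endpoints are `c` with the star filled by `0` and by `1`. Codewords sharing an endpoint
are at distance at most 2 (triangle inequality through that endpoint); conversely, codewords at
distance at most 2 with different stars agree off both stars and hence share an endpoint. For
parallel codewords, the distance between them bounds every distance between their endpoints from
below and equals the distance between the endpoints with the same star value. Thus minimum
distance 3 is equivalent to disjointness of the edges together with the parallel condition, and
`2 ^ (n - 1)` disjoint edges are exactly what it takes to cover the `2 ^ n` vertices.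
-/

open Finset

lemma existsUnique_and_iff {α : Type*} {p q : α → Prop} :
    (∃! x, p x ∧ q x) ↔ (∃ x, p x ∧ q x) ∧ ∀ x, p x → ∀ y, p y → q x → q y → x = y :=
  ⟨fun ⟨x, hx, hu⟩ =>
      ⟨⟨x, hx⟩, fun y hy z hz hqy hqz => (hu y ⟨hy, hqy⟩).trans (hu z ⟨hz, hqz⟩).symm⟩,
    fun ⟨⟨x, hx⟩, hu⟩ => ⟨x, hx, fun y hy => hu y hy.1 x hx.1 hy.2 hx.2⟩⟩

namespace Hypercube

variable {n : ℕ}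

lemma isX_iff_existsUnique {c : TW n} : isX c ↔ ∃! j, c j = none :=
  (Fintype.existsUnique_iff_card_one _).symm

lemma pos_of_isX {c : TW n} (hc : isX c) : 0 < n := by
  obtain ⟨j, -⟩ := (isX_iff_existsUnique.1 hc).exists
  exact j.pos

/-- For `c ∈ X^n` this says that `v` is an endpoint of the edge `χ⁻¹(c)`. -/
def InSubcube (v : BW n) (c : TW n) : Prop := ∀ i a, c i = some a → v i = a

lemma hammingDist_emb_eq_one_iff {c : TW n} (hc : isX c) (v : BW n) :
    hammingDist (emb v) c = 1 ↔ InSubcube v c := by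
  rw [isX] at hc
  constructor
  · intro h i a hia
    have hstars : ({i | c i = none} : Finset (Fin n)) ⊆ ({i | emb v i ≠ c i} : Finset (Fin n)) :=
      fun i hi => by
      rw [mem_filter_univ] at hi ⊢
      simp [emb, hi]
    have heq := eq_of_subset_of_card_le hstars (h.trans hc.symm).le
    by_contra hne
    have hi : i ∈ ({i | emb v i ≠ c i} : Finset (Fin n)) := by
      rw [mem_filter_univ, hia]
      simpa [emb] using hne
    simp [← heq, hia] at hi
  · intro h
    rw [hammingDist, ← hc]
    refine congrArg card (filter_congr fun i _ => ?_)
    cases hci : c i with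
    | none => simp [emb]
    | some a => simp [emb, h i a hci]

def fill (c : TW n) (b : ZMod 2) : BW n := fun i => (c i).getD b

lemma inSubcube_fill (c : TW n) (b : ZMod 2) : InSubcube (fill c b) c :=
  fun i a h => by simp [fill, h]

lemma exists_fill_eq_iff {c : TW n} (hc : isX c) {v : BW n} :
    (∃ b, fill c b = v) ↔ InSubcube v c := by
  refine ⟨fun ⟨b, hb⟩ => hb ▸ inSubcube_fill c b, fun hv => ?_⟩
  obtain ⟨j, -, hj⟩ := isX_iff_existsUnique.1 hc
  refine ⟨v j, funext fun i => ?_⟩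
  cases hci : c i with
  | none => obtain rfl := hj i hci; simp [fill, hci]
  | some a => simp [fill, hci, hv i a hci]

lemma fill_injective {c : TW n} {j : Fin n} (hj : c j = none) : Function.Injective (fill c) :=
  fun b b' h => by simpa [fill, hj] using congrFun h j

lemma forall_exists_inSubcube_iff {C : Finset (TW n)} (hX : ∀ c ∈ C, isX c)
    (hdisj : ∀ v, ∀ c ∈ C, ∀ c' ∈ C, InSubcube v c → InSubcube v c' → c = c') :
    (∀ v, ∃ c ∈ C, InSubcube v c) ↔ 2 * #C = 2 ^ n := by
  have hmem : ∀ v, v ∈ C.biUnion (fun c => univ.image (fill c)) ↔ ∃ c ∈ C, InSubcube v c := by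
    intro v
    simp only [mem_biUnion, mem_image, mem_univ, true_and]
    exact exists_congr fun c => and_congr_right fun hc => exists_fill_eq_iff (hX c hc)
  have hcard : #(C.biUnion fun c => univ.image (fill c)) = 2 * #C := by
    rw [card_biUnion, mul_comm, ← smul_eq_mul, ← sum_const]
    · refine sum_congr rfl fun c hc => ?_
      obtain ⟨j, hj, -⟩ := isX_iff_existsUnique.1 (hX c hc)
      rw [card_image_of_injective _ (fill_injective hj)]
      rfl
    · refine fun c hc c' hc' hne => disjoint_left.2 fun v hv hv' => hne ?_
      rw [mem_image_univ_iff_mem_range] at hv hv'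
      exact hdisj v c hc c' hc' ((exists_fill_eq_iff (hX c hc)).1 hv)
        ((exists_fill_eq_iff (hX c' hc')).1 hv')
  have hcube : Fintype.card (BW n) = 2 ^ n := by simp
  rw [← hcard, ← hcube, card_eq_iff_eq_univ, eq_univ_iff_forall]
  exact forall_congr' fun v => (hmem v).symm

lemma hammingDist_le_two_of_inSubcube {c c' : TW n} (hc : isX c) (hc' : isX c') {v : BW n}
    (hv : InSubcube v c) (hv' : InSubcube v c') : hammingDist c c' ≤ 2 :=
  calc hammingDist c c' ≤ hammingDist c (emb v) + hammingDist (emb v) c' :=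
        hammingDist_triangle _ _ _
    _ = 2 := by
        rw [hammingDist_comm, (hammingDist_emb_eq_one_iff hc v).2 hv,
          (hammingDist_emb_eq_one_iff hc' v).2 hv']

lemma hammingDist_le_of_inSubcube {c c' : TW n} (hpar : ∀ i, c i = none ↔ c' i = none)
    {v v' : BW n} (hv : InSubcube v c) (hv' : InSubcube v' c') :
    hammingDist c c' ≤ hammingDist v v' := by
  unfold hammingDist
  gcongr with i
  intro hvv
  cases hci : c i with
  | none => exact ((hpar i).1 hci).symm
  | some a =>
    obtain ⟨a', hci'⟩ :=
      Option.ne_none_iff_exists'.1 fun h : c' i = none => by simp [(hpar i).2 h] at hci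
    rw [hci', ← hv i a hci, ← hv' i a' hci', hvv]

lemma hammingDist_fill_le (c c' : TW n) (b : ZMod 2) :
    hammingDist (fill c b) (fill c' b) ≤ hammingDist c c' :=
  hammingDist_comp_le_hammingDist fun _ (o : Option (ZMod 2)) => o.getD b

def Compatible (c c' : TW n) : Prop := ∀ i a a', c i = some a → c' i = some a' → a = a'

lemma Compatible.exists_inSubcube {c c' : TW n} (h : Compatible c c') :
    ∃ v, InSubcube v c ∧ InSubcube v c' := by
  refine ⟨fun i => (c i).getD ((c' i).getD 0), fun i a hi => by simp [hi], fun i a' hi' => ?_⟩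
  cases hci : c i with
  | none => simp [hci, hi']
  | some a => simpa [hci] using h i a a' hci hi'

lemma compatible_of_hammingDist_le_two {c c' : TW n} {j j' : Fin n} (hj : c j = none)
    (hj' : c' j' = none) (hcj : c' j ≠ none) (hcj' : c j' ≠ none) (h : hammingDist c c' ≤ 2) :
    Compatible c c' := by
  have hne : j ≠ j' := by rintro rfl; exact hcj' hj
  have hdiff : {j, j'} = ({i | c i ≠ c' i} : Finset (Fin n)) := by
    refine eq_of_subset_of_card_le (fun i hi => ?_) (by rwa [card_pair hne])
    rcases mem_insert.1 hi with rfl | hi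
    · simpa [hj] using Ne.symm hcj
    · rw [mem_singleton.1 hi]; simpa [hj'] using hcj'
  intro i a a' ha ha'
  have hi : i ∉ ({j, j'} : Finset (Fin n)) := by
    simp only [mem_insert, mem_singleton, not_or]
    exact ⟨by rintro rfl; simp [hj] at ha, by rintro rfl; simp [hj'] at ha'⟩
  simpa [hdiff, ha, ha'] using hi

lemma three_le_hammingDist {c c' : TW n} (hc : isX c) (hc' : isX c')
    (hdisj : ¬∃ v, InSubcube v c ∧ InSubcube v c')
    (hpar : (∀ i, c i = none ↔ c' i = none) → 3 ≤ hammingDist (fill c 0) (fill c' 0)) :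
    3 ≤ hammingDist c c' := by
  by_contra! hlt
  obtain ⟨j, hj, hju⟩ := isX_iff_existsUnique.1 hc
  obtain ⟨j', hj', hju'⟩ := isX_iff_existsUnique.1 hc'
  by_cases hjj : j = j'
  · subst hjj
    have hsame : ∀ i, c i = none ↔ c' i = none :=
      fun i => ⟨fun h => hju i h ▸ hj', fun h => hju' i h ▸ hj⟩
    exact ((hpar hsame).trans (hammingDist_fill_le c c' 0)).not_gt hlt
  · exact hdisj (compatible_of_hammingDist_le_two hj hj' (fun h => hjj (hju' j h))
      (fun h => hjj (hju j' h).symm) (by omega)).exists_inSubcube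

lemma forall_existsUnique_endpoint_iff {C : Finset (TW n)} (hX : ∀ c ∈ C, isX c) :
    (∀ v : BW n, ∃! c, c ∈ C ∧ hammingDist (emb v) c = 1) ↔
      (∀ v, ∃ c ∈ C, InSubcube v c) ∧
        ∀ v, ∀ c ∈ C, ∀ c' ∈ C, InSubcube v c → InSubcube v c' → c = c' := by
  rw [← forall_and]
  refine forall_congr' fun v => ?_
  rw [existsUnique_congr fun c => and_congr_right fun hc => hammingDist_emb_eq_one_iff (hX c hc) v,
    existsUnique_and_iff]

lemma two_mul_eq_two_pow_iff {k : ℕ} (hn : 0 < n) : 2 * k = 2 ^ n ↔ k = 2 ^ (n - 1) := by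
  obtain ⟨m, rfl⟩ := Nat.exists_eq_add_of_lt hn
  rw [pow_succ']
  simp

end Hypercube

open Hypercube in
/-- a set `C ⊆ X^n` has minimum distance 3 and cardinality `2^(n-1)`
(i.e. is a perfect distance-3 code) iff the corresponding set of hypercube edges
(a binary word `v` is an endpoint of the edge `χ⁻¹(c)` iff `d_H(emb v, c) = 1`)
is a perfect matching (every vertex lies on exactly one edge of the set) such that
no two distinct parallel edges (same `*`-position) are at distance 1 or 2, i.e. all
pairs of endpoints of two distinct parallel edges are at Hamming distance ≥ 3. -/
theorem stmt7 {n : ℕ} (C : Finset (TW n)) (hX : ∀ c ∈ C, isX c) :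
    ((∀ c ∈ C, ∀ c' ∈ C, c ≠ c' → 3 ≤ hammingDist c c') ∧ C.card = 2 ^ (n - 1)) ↔
    ((∀ v : BW n, ∃! c : TW n, c ∈ C ∧ hammingDist (emb v) c = 1) ∧
     (∀ c ∈ C, ∀ c' ∈ C, c ≠ c' → (∀ j, c j = none ↔ c' j = none) →
       ∀ v v' : BW n, hammingDist (emb v) c = 1 → hammingDist (emb v') c' = 1 →
         3 ≤ hammingDist v v')) := by
  have hend : ∀ c ∈ C, ∀ v, hammingDist (emb v) c = 1 ↔ InSubcube v c :=
    fun c hc => hammingDist_emb_eq_one_iff (hX c hc)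
  rw [forall_existsUnique_endpoint_iff hX]
  constructor
  · rintro ⟨hmin, hcard⟩
    obtain ⟨c₀, hc₀⟩ := card_pos.1 (hcard ▸ Nat.two_pow_pos _)
    have hdisj : ∀ v, ∀ c ∈ C, ∀ c' ∈ C, InSubcube v c → InSubcube v c' → c = c' :=
      fun v c hc c' hc' hv hv' => by_contra fun hne => (hmin c hc c' hc' hne).not_gt
        (Nat.lt_succ_of_le (hammingDist_le_two_of_inSubcube (hX c hc) (hX c' hc') hv hv'))
    refine ⟨⟨(forall_exists_inSubcube_iff hX hdisj).2
      ((two_mul_eq_two_pow_iff (pos_of_isX (hX c₀ hc₀))).2 hcard), hdisj⟩, ?_⟩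
    exact fun c hc c' hc' hne hpar v v' hv hv' => (hmin c hc c' hc' hne).trans
      (hammingDist_le_of_inSubcube hpar ((hend c hc v).1 hv) ((hend c' hc' v').1 hv'))
  · rintro ⟨⟨hcover, hdisj⟩, hpar⟩
    obtain ⟨c₀, hc₀, -⟩ := hcover 0
    refine ⟨fun c hc c' hc' hne => ?_, (two_mul_eq_two_pow_iff (pos_of_isX (hX c₀ hc₀))).1
      ((forall_exists_inSubcube_iff hX hdisj).1 hcover)⟩
    exact three_le_hammingDist (hX c hc) (hX c' hc')
      (fun ⟨v, hv, hv'⟩ => hne (hdisj v c hc c' hc' hv hv'))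
      (fun hsame => hpar c hc c' hc' hne hsame _ _
        ((hend c hc _).2 (inSubcube_fill c 0)) ((hend c' hc' _).2 (inSubcube_fill c' 0)))
end

section
/- Let n = 2^m, let H be the extended Hamming code of length n, let P = H_β^0 be an even coset and Q = H_{β'}^1 an odd coset of (possibly different) extended Hamming codes. For each p ∈ P let q(p) ∈ Q be the unique word of Q at Hamming distance 1 from p, and let r(p) ∈ X^n be the word with * in the coordinate where p and q(p) differ, agreeing with p elsewhere. Then the code R(P,Q) = { r(p) : p ∈ P } ⊆ X^n has minimum Hamming distance at least 3. -/
/-- The coset of an extended Hamming code determined by the enumeration `α` of `F^m`,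
the parity `ε` and the syndrome `β`:
`{ x ∈ F^n : Σ x_i = ε, Σ x_i α_i = β }`. -/
def coset {n m : ℕ} (α : Fin n → BW m) (ε : ZMod 2) (β : BW m) : Set (BW n) :=
  {x | (∑ i, x i) = ε ∧ (∑ i, x i • α i) = β}

/-- `r(p)` for an edge `{p, q}`: the ternary word with `*` where `p` and `q` differ,
agreeing with `p` elsewhere. -/
def rword {n : ℕ} (p q : BW n) : TW n := fun i => if p i = q i then some (p i) else none

/-!
Two distinct words of an even coset differ by a nonzero codeword of the extended Hamming code,
so they are at distance at least 4. Since `r(p)` agrees with `p` outside the single coordinate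
where `p` and `q(p)` differ, `d(r(p), r(p')) ≥ d(p, p') - 1 ≥ 3`.
-/

open Finset

lemma sum_smul_eq_sum_support_zmod_two {ι M : Type*} [Fintype ι] [AddCommMonoid M]
    [Module (ZMod 2) M] (z : ι → ZMod 2) (v : ι → M) :
    ∑ i, z i • v i = ∑ i with z i ≠ 0, v i := by
  rw [sum_filter]
  refine sum_congr rfl fun i _ => ?_
  obtain h | h : z i = 0 ∨ z i = 1 := by
    generalize z i = a
    revert a
    decide
  all_goals simp [h]

lemma hammingDist_eq_hammingNorm_sub {ι : Type*} [Fintype ι] {G : ι → Type*}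
    [∀ i, DecidableEq (G i)] [∀ i, AddGroup (G i)] (x y : ∀ i, G i) :
    hammingDist x y = hammingNorm (x - y) := by
  simp [hammingDist, hammingNorm, sub_eq_zero]

lemma sub_mem_coset_zero {n m : ℕ} {α : Fin n → BW m} {ε : ZMod 2} {β : BW m} {x y : BW n}
    (hx : x ∈ coset α ε β) (hy : y ∈ coset α ε β) : x - y ∈ coset α 0 0 := by
  obtain ⟨hx₁, hx₂⟩ := hx
  obtain ⟨hy₁, hy₂⟩ := hy
  constructor
  · simp [sum_sub_distrib, hx₁, hy₁]
  · simp [sub_smul, sum_sub_distrib, hx₂, hy₂]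

/-- The weight is even, and a word of weight 2 supported on `{a, b}` would force
`α a + α b = 0`, i.e. `α a = α b`. -/
lemma four_le_hammingNorm_of_mem_coset_zero {n m : ℕ} {α : Fin n → BW m}
    (hα : Function.Injective α) {z : BW n} (hz : z ∈ coset α 0 0) (hz₀ : z ≠ 0) :
    4 ≤ hammingNorm z := by
  obtain ⟨hpar, hsyn⟩ := hz
  have hsupp_card : (hammingNorm z : ZMod 2) = 0 := by
    have hcount : (hammingNorm z : ZMod 2) = ∑ i, z i • (1 : ZMod 2) := by
      rw [sum_smul_eq_sum_support_zmod_two, sum_const, nsmul_one, hammingNorm]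
    simpa [hcount] using hpar
  have heven : 2 ∣ hammingNorm z := (ZMod.natCast_eq_zero_iff _ _).mp hsupp_card
  have hpos : 0 < hammingNorm z := hammingNorm_pos_iff.mpr hz₀
  have hne_two : hammingNorm z ≠ 2 := by
    intro h2
    obtain ⟨a, b, hab, hsupp⟩ := card_eq_two.mp h2
    rw [sum_smul_eq_sum_support_zmod_two, hsupp, sum_pair hab, add_eq_zero_iff_eq_neg,
      ZModModule.neg_eq_self] at hsyn
    exact hab (hα hsyn)
  omega

lemma four_le_hammingDist_of_mem_coset {n m : ℕ} {α : Fin n → BW m}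
    (hα : Function.Injective α) {ε : ZMod 2} {β : BW m} {x y : BW n}
    (hx : x ∈ coset α ε β) (hy : y ∈ coset α ε β) (hxy : x ≠ y) :
    4 ≤ hammingDist x y := by
  rw [hammingDist_eq_hammingNorm_sub]
  exact four_le_hammingNorm_of_mem_coset_zero hα (sub_mem_coset_zero hx hy) (sub_ne_zero.mpr hxy)

lemma rword_ne_of_eq_of_ne {n : ℕ} {p q p' q' : BW n} {j : Fin n} (hpq : p j = q j)
    (hpp' : p j ≠ p' j) : rword p q j ≠ rword p' q' j := by
  unfold rword
  split_ifs <;> simp [hpp']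

/-- Outside the coordinates where `p` and `q` differ, `rword p q` still records `p`. -/
lemma hammingDist_le_hammingDist_rword_add {n : ℕ} (p q p' q' : BW n) :
    hammingDist p p' ≤ hammingDist (rword p q) (rword p' q') + hammingDist p q := by
  unfold hammingDist
  refine (card_le_card fun j hj => ?_).trans (card_union_le _ _)
  simp only [mem_union, mem_filter, mem_univ, true_and] at hj ⊢
  by_cases hpq : p j = q j
  · exact .inl (rword_ne_of_eq_of_ne hpq hj)
  · exact .inr hpq

theorem stmt8_general {m : ℕ} (n : ℕ)
    (α α' : Fin n → BW m) (hα : Function.Bijective α)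
    (β β' : BW m)
    (q : BW n → BW n)
    (hq : ∀ p ∈ coset α 0 β, q p ∈ coset α' 1 β' ∧ hammingDist p (q p) = 1) :
    ∀ p ∈ coset α 0 β, ∀ p' ∈ coset α 0 β,
      rword p (q p) ≠ rword p' (q p') →
        3 ≤ hammingDist (rword p (q p)) (rword p' (q p')) := by
  intro p hp p' hp' hr
  have hpp' : p ≠ p' := by
    rintro rfl
    exact hr rfl
  have h4 := four_le_hammingDist_of_mem_coset hα.injective hp hp' hpp'
  have h1 := (hq p hp).2
  have := hammingDist_le_hammingDist_rword_add p (q p) p' (q p')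
  omega

/-- let `n = 2^m`, `P = H^0_β` an even coset and `Q = H^1_{β'}` an odd coset
of (possibly different) extended Hamming codes, and for `p ∈ P` let `q p ∈ Q` be at
Hamming distance 1 from `p`.  Then the code `R(P,Q) = { r(p) : p ∈ P } ⊆ X^n` has
minimum Hamming distance at least 3. -/
theorem stmt8 {m : ℕ} (hm : 2 ≤ m) (n : ℕ) (hn : n = 2 ^ m)
    (α α' : Fin n → BW m) (hα : Function.Bijective α) (hα' : Function.Bijective α')
    (β β' : BW m)
    (q : BW n → BW n)
    (hq : ∀ p ∈ coset α 0 β, q p ∈ coset α' 1 β' ∧ hammingDist p (q p) = 1) :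
    ∀ p ∈ coset α 0 β, ∀ p' ∈ coset α 0 β,
      rword p (q p) ≠ rword p' (q p') →
        3 ≤ hammingDist (rword p (q p)) (rword p' (q p')) :=
  stmt8_general n α α' hα β β' q hq
end

section
/- Let n = 2^m with m ≥ 2, let H be the extended Hamming code of length n, and let f: F^m → F^m be a linear bijection such that f + Id is also a bijection. Then the set C_{H,f} = ⋃_{β ∈ F^m} R(H_β^0, H_{f(β)}^1) is a perfect distance-3 code in X^n, i.e., it has minimum distance 3 and cardinality 2^{n-1}. -/
/-- The code `C_{H,f} = ⋃_{β} R(H^0_β, H^1_{f β})`. -/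
def CHf {n m : ℕ} (α : Fin n → BW m) (f : BW m → BW m) : Set (TW n) :=
  {c | ∃ (β : BW m) (p q : BW n), p ∈ coset α 0 β ∧ q ∈ coset α 1 (f β) ∧
        hammingDist p q = 1 ∧ c = rword p q}

/-!
A codeword of `C_{H,f}` is an even word `p` with a `*` at the position `j` whose column is
`α j = f β + β`, where `β` is the syndrome of `p`; hence `C_{H,f}` is an injective image of the
`2^(n-1)` even words. Two codewords with the same star position have equal syndromes, because
`f + id` is injective, so `p - p'` is a nonzero word of the extended Hamming code and has weight
at least 4. Two codewords with stars at `j ≠ j'` and at distance 2 agree elsewhere, so `p' = p` or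
`p' = p + e_j + e_j'`; either way `f β = f β'`, hence `β = β'` and `j = j'`.
-/

open Finset

def starAt {ι β : Type*} [DecidableEq ι] (p : ι → β) (j : ι) : ι → Option β :=
  Function.update (fun i => some (p i)) j none

section StarAt

variable {ι β : Type*} [DecidableEq ι] {p p' : ι → β} {i j j' : ι}

lemma eq_of_starAt_eq (h : starAt p j = starAt p' j') : j = j' := by
  by_contra hjj
  simpa [starAt, hjj] using congrFun h j

variable [Fintype ι] [DecidableEq β]

lemma hammingDist_le_hammingDist_starAt_add_one :
    hammingDist p p' ≤ hammingDist (starAt p j) (starAt p' j) + 1 := by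
  unfold hammingDist
  calc #{i | p i ≠ p' i}
      ≤ #(insert j (univ.filter fun i => starAt p j i ≠ starAt p' j i)) := by
        refine card_le_card fun i hi => ?_
        by_cases hij : i = j
        · simp [hij]
        · simp_all [starAt, Function.update_apply]
    _ ≤ _ := card_insert_le _ _

lemma three_le_hammingDist_starAt (hjj : j ≠ j') (hij : i ≠ j) (hij' : i ≠ j')
    (hpi : p i ≠ p' i) : 3 ≤ hammingDist (starAt p j) (starAt p' j') := by
  have hsub : {j, j', i} ⊆ univ.filter fun k => starAt p j k ≠ starAt p' j' k := by
    intro k hk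
    simp only [mem_insert, mem_singleton] at hk
    rcases hk with rfl | rfl | rfl <;> simp [starAt, Function.update_apply, *, Ne.symm hjj]
  calc 3 = #{j, j', i} := by
        rw [card_insert_of_notMem (by simp [hjj, Ne.symm hij]),
          card_pair (Ne.symm hij')]
    _ ≤ _ := card_le_card hsub

end StarAt

section ZModTwo

variable {ι M : Type*} [Fintype ι] [AddCommGroup M] [Module (ZMod 2) M]

lemma ZModModule.add_eq_zero_iff_eq {x y : M} : x + y = 0 ↔ x = y := by
  rw [add_eq_zero_iff_eq_neg, ZModModule.neg_eq_self]

lemma zmod_two_eq_one_of_ne_zero {a : ZMod 2} (ha : a ≠ 0) : a = 1 := by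
  revert a; decide

lemma sum_smul_eq_sum_filter_ne_zero (x : ι → ZMod 2) (v : ι → M) :
    ∑ i, x i • v i = ∑ i with x i ≠ 0, v i := by
  rw [sum_filter]
  refine sum_congr rfl fun i _ => ?_
  split_ifs with hi
  · rw [zmod_two_eq_one_of_ne_zero hi, one_smul]
  · rw [not_not.mp hi, zero_smul]

lemma even_hammingNorm {x : ι → ZMod 2} (hx : ∑ i, x i = 0) : Even (hammingNorm x) := by
  rw [← ZMod.natCast_eq_zero_iff_even, ← hx, hammingNorm]
  simpa using (sum_smul_eq_sum_filter_ne_zero x (fun _ => (1 : ZMod 2))).symm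

variable [DecidableEq ι]

lemma sum_add_single_smul (p : ι → ZMod 2) (j : ι) (v : ι → M) :
    ∑ i, (p + Pi.single j 1 : ι → ZMod 2) i • v i = ∑ i, p i • v i + v j := by
  rw [← one_smul (ZMod 2) (v j), ← Fintype.linearCombination_apply_single (ZMod 2) v j]
  exact map_add (Fintype.linearCombination (ZMod 2) v) p (Pi.single j 1)

lemma hammingNorm_eq_one_iff {x : ι → ZMod 2} :
    hammingNorm x = 1 ↔ ∃ j, x = Pi.single j 1 := by
  constructor
  · intro h
    obtain ⟨j, hj⟩ := card_eq_one.mp h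
    refine ⟨j, funext fun i => ?_⟩
    have hi := Finset.ext_iff.mp hj i
    by_cases hij : i = j
    · subst hij
      simpa using zmod_two_eq_one_of_ne_zero (by simpa using hi)
    · simpa [hij] using hi
  · rintro ⟨j, rfl⟩
    rw [hammingNorm, card_eq_one]
    exact ⟨j, by ext i; by_cases hij : i = j <;> simp [hij]⟩

lemma hammingDist_eq_one_iff {p q : ι → ZMod 2} :
    hammingDist p q = 1 ↔ ∃ j, q = p + Pi.single j 1 := by
  rw [hammingDist_eq_hammingNorm, hammingNorm_eq_one_iff]
  exact exists_congr fun j => neg_add_eq_iff_eq_add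

lemma four_le_hammingNorm {α : ι → M} (hα : Function.Injective α) {x : ι → ZMod 2}
    (hpar : ∑ i, x i = 0) (hsyn : ∑ i, x i • α i = 0) (hx : x ≠ 0) :
    4 ≤ hammingNorm x := by
  obtain ⟨k, hk⟩ := even_hammingNorm hpar
  have h0 : hammingNorm x ≠ 0 := hammingNorm_ne_zero_iff.mpr hx
  suffices hammingNorm x ≠ 2 by omega
  intro h2
  obtain ⟨a, b, hab, hsupp⟩ := card_eq_two.mp h2
  rw [sum_smul_eq_sum_filter_ne_zero, hsupp, sum_pair hab, ZModModule.add_eq_zero_iff_eq] at hsyn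
  exact hab (hα hsyn)

lemma eq_zero_or_eq_single_add_single {x : ι → ZMod 2} (hx : ∑ i, x i = 0) {a b : ι}
    (hab : a ≠ b) (hsupp : ∀ i, i ≠ a → i ≠ b → x i = 0) :
    x = 0 ∨ x = Pi.single a 1 + Pi.single b 1 := by
  have hxab : x a = x b := by
    rwa [Fintype.sum_eq_add a b hab fun i hi => hsupp i hi.1 hi.2,
      ZModModule.add_eq_zero_iff_eq] at hx
  by_cases ha : x a = 0
  · left
    funext i
    by_cases hia : i = a <;> by_cases hib : i = b <;> simp_all
  · right
    have ha1 := zmod_two_eq_one_of_ne_zero ha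
    funext i
    by_cases hia : i = a <;> by_cases hib : i = b <;> simp_all [Ne.symm hab]

lemma ncard_sum_eq_zero [Nonempty ι] :
    {p : ι → ZMod 2 | ∑ i, p i = 0}.ncard = 2 ^ (Fintype.card ι - 1) := by
  let parity : (ι → ZMod 2) →ₗ[ZMod 2] ZMod 2 := Fintype.linearCombination (ZMod 2) 1
  have hparity : ∀ p, parity p = ∑ i, p i := fun p => by
    simp [parity, Fintype.linearCombination_apply]
  have hsurj : Function.Surjective parity := fun t =>
    ⟨Pi.single (Classical.arbitrary ι) t, by simp [parity]⟩
  have hcard := Submodule.card_eq_card_quotient_mul_card (LinearMap.ker parity)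
  rw [Nat.card_congr (parity.quotKerEquivOfSurjective hsurj).toEquiv, Nat.card_zmod,
    Nat.card_fun, Nat.card_zmod, Nat.card_eq_fintype_card] at hcard
  have hker : (LinearMap.ker parity : Set (ι → ZMod 2)) = {p | ∑ i, p i = 0} := by
    ext p; simp [hparity]
  rw [← hker, ← Nat.card_coe_set_eq]
  have hpos : Fintype.card ι ≠ 0 := Fintype.card_ne_zero
  rw [← Nat.sub_one_add_one hpos, pow_succ] at hcard
  exact (Nat.eq_of_mul_eq_mul_right two_pos hcard).symm

lemma injOn_starAt (g : (ι → ZMod 2) → ι) :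
    Set.InjOn (fun p => starAt p (g p)) {p | ∑ i, p i = 0} := by
  intro p hp p' hp' h
  dsimp only at h
  rw [← eq_of_starAt_eq h] at h
  have hle := hammingDist_le_hammingDist_starAt_add_one (p := p) (p' := p') (j := g p)
  rw [h, hammingDist_self] at hle
  obtain ⟨k, hk⟩ : Even (hammingDist p p') := by
    rw [hammingDist_eq_hammingNorm]
    exact even_hammingNorm (by simp_all [sum_add_distrib])
  exact hammingDist_eq_zero.mp (by omega)

end ZModTwo

section CHf

variable {n m : ℕ} {α : Fin n → BW m} {f : BW m → BW m}

lemma isX_starAt (p : BW n) (j : Fin n) : isX (starAt p j) := by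
  rw [isX, card_eq_one]
  exact ⟨j, by ext i; by_cases hij : i = j <;> simp [starAt, Function.update_apply, hij]⟩

lemma rword_add_single (p : BW n) (j : Fin n) :
    rword p (p + Pi.single j 1) = starAt p j := by
  funext i
  by_cases hij : i = j <;> simp [rword, starAt, hij]

lemma mem_CHf_iff {c : TW n} : c ∈ CHf α f ↔ ∃ (p : BW n) (j : Fin n), ∑ i, p i = 0 ∧
    α j = f (∑ i, p i • α i) + ∑ i, p i • α i ∧ c = starAt p j := by
  constructor
  · rintro ⟨β, p, q, ⟨hp, hpβ⟩, ⟨-, hq⟩, hd, rfl⟩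
    obtain ⟨j, rfl⟩ := hammingDist_eq_one_iff.mp hd
    refine ⟨p, j, hp, ?_, rword_add_single p j⟩
    rw [sum_add_single_smul, hpβ] at hq
    rw [hpβ, ← hq, add_comm β, add_assoc, ZModModule.add_self, add_zero]
  · rintro ⟨p, j, hp, hj, rfl⟩
    refine ⟨_, p, p + Pi.single j 1, ⟨hp, rfl⟩, ⟨by simp [sum_add_distrib, hp], ?_⟩,
      hammingDist_eq_one_iff.mpr ⟨j, rfl⟩, (rword_add_single p j).symm⟩
    rw [sum_add_single_smul, hj, add_left_comm, ZModModule.add_self, add_zero]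

lemma CHf_eq_image (hα : Function.Bijective α) :
    CHf α f = (fun p => starAt p ((Equiv.ofBijective α hα).symm
      (f (∑ i, p i • α i) + ∑ i, p i • α i))) '' {p | ∑ i, p i = 0} := by
  ext c
  rw [mem_CHf_iff]
  constructor
  · rintro ⟨p, j, hp, hj, rfl⟩
    exact ⟨p, hp, by dsimp only; rw [← hj, Equiv.ofBijective_symm_apply_apply]⟩
  · rintro ⟨p, hp, rfl⟩
    exact ⟨p, _, hp, Equiv.ofBijective_apply_symm_apply α hα _, rfl⟩

variable {p p' : BW n} {j j' : Fin n}

lemma three_le_hammingDist_starAt_self (hα : Function.Injective α)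
    (hf1 : Function.Injective fun x => f x + x) (hp : ∑ i, p i = 0) (hp' : ∑ i, p' i = 0)
    (hj : α j = f (∑ i, p i • α i) + ∑ i, p i • α i)
    (hj' : α j = f (∑ i, p' i • α i) + ∑ i, p' i • α i)
    (hne : starAt p j ≠ starAt p' j) : 3 ≤ hammingDist (starAt p j) (starAt p' j) := by
  have hsyn : ∑ i, p i • α i = ∑ i, p' i • α i := hf1 (hj.symm.trans hj')
  have h4 := four_le_hammingNorm hα (x := p - p') (by simp [sum_sub_distrib, hp, hp'])
    (by simp [sub_smul, sum_sub_distrib, hsyn]) (sub_ne_zero.mpr fun h => hne (h ▸ rfl))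
  rw [← neg_add_eq_sub, ← hammingDist_eq_hammingNorm, hammingDist_comm] at h4
  have := hammingDist_le_hammingDist_starAt_add_one (p := p) (p' := p') (j := j)
  omega

lemma three_le_hammingDist_starAt_of_ne (hα : Function.Injective α)
    (hf : Function.Injective f) (hjj : j ≠ j') (hp : ∑ i, p i = 0) (hp' : ∑ i, p' i = 0)
    (hj : α j = f (∑ i, p i • α i) + ∑ i, p i • α i)
    (hj' : α j' = f (∑ i, p' i • α i) + ∑ i, p' i • α i) :
    3 ≤ hammingDist (starAt p j) (starAt p' j') := by
  by_contra hlt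
  have hagree : ∀ i, i ≠ j → i ≠ j' → (p - p') i = 0 := fun i hij hij' =>
    sub_eq_zero.mpr (by_contra fun h => hlt (three_le_hammingDist_starAt hjj hij hij' h))
  have hsyn : ∑ i, p i • α i = ∑ i, p' i • α i := by
    rcases eq_zero_or_eq_single_add_single (by simp [sum_sub_distrib, hp, hp']) hjj hagree
      with h | h
    · rw [sub_eq_zero.mp h]
    · have := congrArg (Fintype.linearCombination (ZMod 2) α) h
      rw [map_sub, map_add, Fintype.linearCombination_apply_single,
        Fintype.linearCombination_apply_single, one_smul, one_smul] at this
      simp only [Fintype.linearCombination_apply] at this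
      rw [ZModModule.sub_eq_add, hj, hj', add_add_add_comm, right_eq_add,
        ZModModule.add_eq_zero_iff_eq] at this
      exact hf this
  exact hjj (hα (by rw [hj, hj', hsyn]))

end CHf

theorem stmt9_general {m : ℕ} (n : ℕ)
    (α : Fin n → BW m) (hα : Function.Bijective α)
    (f : BW m → BW m)
    (hf : Function.Bijective f) (hf1 : Function.Bijective (fun x => f x + x)) :
    (∀ c ∈ CHf α f, isX c) ∧
    (∀ c ∈ CHf α f, ∀ c' ∈ CHf α f, c ≠ c' → 3 ≤ hammingDist c c') ∧
    Set.ncard (CHf α f) = 2 ^ (n - 1) := by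
  refine ⟨?_, ?_, ?_⟩
  · intro c hc
    obtain ⟨p, j, -, -, rfl⟩ := mem_CHf_iff.mp hc
    exact isX_starAt p j
  · intro c hc c' hc' hne
    obtain ⟨p, j, hp, hj, rfl⟩ := mem_CHf_iff.mp hc
    obtain ⟨p', j', hp', hj', rfl⟩ := mem_CHf_iff.mp hc'
    rcases eq_or_ne j j' with rfl | hjj
    · exact three_le_hammingDist_starAt_self hα.1 hf1.1 hp hp' hj hj' hne
    · exact three_le_hammingDist_starAt_of_ne hα.1 hf.1 hjj hp hp' hj hj'
  · have : Nonempty (Fin n) := (hα.2 0).nonempty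
    rw [CHf_eq_image hα, (injOn_starAt _).ncard_image, ncard_sum_eq_zero, Fintype.card_fin]

/-- for `n = 2^m` (`m ≥ 2`) and a linear bijection `f : F^m → F^m` such that
`f + Id` is also a bijection, the set `C_{H,f}` is a perfect distance-3 code in `X^n`:
it has minimum distance 3 and cardinality `2^(n-1)`. -/
theorem stmt9 {m : ℕ} (hm : 2 ≤ m) (n : ℕ) (hn : n = 2 ^ m)
    (α : Fin n → BW m) (hα : Function.Bijective α)
    (f : BW m → BW m) (hlin : IsLinearMap (ZMod 2) f)
    (hf : Function.Bijective f) (hf1 : Function.Bijective (fun x => f x + x)) :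
    (∀ c ∈ CHf α f, isX c) ∧
    (∀ c ∈ CHf α f, ∀ c' ∈ CHf α f, c ≠ c' → 3 ≤ hammingDist c c') ∧
    Set.ncard (CHf α f) = 2 ^ (n - 1) :=
  stmt9_general n α hα f hf hf1
end

section
/- The automorphism group of the code C_{H,f} (constructed from the extended Hamming code H of length n = 2^m and a linear bijection f with f + Id bijective) acts transitively on C_{H,f}: for any two codewords x, y ∈ C_{H,f} there is a pair (π, z) of a coordinate permutation π and a vector z ∈ {0,1}^n with π(C_{H,f}) + z = C_{H,f} and π(x) + z = y. -/
/-- Addition of a ternary symbol and a binary symbol, with `* + 0 = * + 1 = *`. -/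
def addStar : Option (ZMod 2) → ZMod 2 → Option (ZMod 2)
  | none, _ => none
  | some a, b => some (a + b)

/-- The action of an automorphism candidate `(π, z)` on a ternary word: `π(w) + z`. -/
def act {n : ℕ} (π : Equiv.Perm (Fin n)) (z : BW n) (w : TW n) : TW n :=
  fun i => addStar (w (π.symm i)) (z i)

/- ---------- auxiliary lemmas ---------- -/

lemma z2_add_self : ∀ a : ZMod 2, a + a = 0 := by decide
lemma z2_ne : ∀ a b : ZMod 2, a ≠ b → a + b = 1 := by decide
lemma z2_eq : ∀ a b : ZMod 2, a = b → a + b = 0 := by decide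
lemma z2_abc : ∀ a b : ZMod 2, a + (b + a) = b := by decide
lemma z2_aab : ∀ a b : ZMod 2, a + (a + b) = b := by decide
lemma z2_cancel : ∀ a b : ZMod 2, a + b + b = a := by decide

lemma bw_add_self {m : ℕ} (w : BW m) : w + w = 0 := by
  funext t; exact z2_add_self (w t)

lemma sum_comp_symm {n : ℕ} (π : Equiv.Perm (Fin n)) (x : BW n) :
    ∑ j, x (π.symm j) = ∑ j, x j :=
  Equiv.sum_comp π.symm x

lemma sum_smul_symm {n m : ℕ} (α : Fin n → BW m) (v : BW m) (π : Equiv.Perm (Fin n))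
    (hπ : ∀ k, α (π k) = α k + v) (x : BW n) :
    ∑ j, x (π.symm j) • α j = (∑ j, x j • α j) + (∑ j, x j) • v := by
  have h1 : ∑ j, x (π.symm j) • α j = ∑ k, x k • α (π k) :=
    (Fintype.sum_equiv π (fun k => x k • α (π k)) (fun j => x (π.symm j) • α j)
      (fun k => by simp)).symm
  rw [h1]
  simp only [hπ, smul_add]
  rw [Finset.sum_add_distrib, ← Finset.sum_smul]

lemma hπ_symm {n m : ℕ} {α : Fin n → BW m} {v : BW m} {π : Equiv.Perm (Fin n)}
    (hπ : ∀ k, α (π k) = α k + v) : ∀ k, α (π.symm k) = α k + v := by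
  intro k
  have h := hπ (π.symm k)
  rw [Equiv.apply_symm_apply] at h
  rw [h]
  funext t
  exact (z2_cancel _ _).symm

lemma hd_perm_add {n : ℕ} (π : Equiv.Perm (Fin n)) (z p q : BW n) :
    hammingDist (fun j => p (π.symm j) + z j) (fun j => q (π.symm j) + z j)
      = hammingDist p q := by
  simp only [hammingDist]
  refine (Finset.card_equiv π ?_).symm
  intro i
  simp only [Finset.mem_filter, Finset.mem_univ, true_and, Equiv.symm_apply_apply, ne_eq,
    add_left_inj]

lemma act_act {n : ℕ} (π : Equiv.Perm (Fin n)) (z : BW n) (c : TW n) :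
    act π z (act π.symm (fun j => z (π j)) c) = c := by
  funext i
  simp only [act, Equiv.symm_symm, Equiv.apply_symm_apply]
  cases c i with
  | none => rfl
  | some a => simp [addStar, z2_cancel]

lemma chf_closure {n m : ℕ} (α : Fin n → BW m) (f : BW m → BW m)
    (hlin : IsLinearMap (ZMod 2) f) (γ v : BW m) (hv : v = f γ + γ)
    (π : Equiv.Perm (Fin n)) (hπ : ∀ k, α (π k) = α k + v)
    (z : BW n) (hz0 : ∑ j, z j = 0) (hzs : ∑ j, z j • α j = γ) :
    ∀ c ∈ CHf α f, act π z c ∈ CHf α f := by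
  rintro c ⟨β, p, q, ⟨hp1, hp2⟩, ⟨hq1, hq2⟩, hd, rfl⟩
  refine ⟨β + γ, fun j => p (π.symm j) + z j, fun j => q (π.symm j) + z j,
    ⟨?_, ?_⟩, ⟨?_, ?_⟩, ?_, ?_⟩
  · rw [Finset.sum_add_distrib, sum_comp_symm, hp1, hz0, add_zero]
  · simp only [add_smul]
    rw [Finset.sum_add_distrib, sum_smul_symm α v π hπ p, hp2, hp1, hzs, zero_smul, add_zero]
  · rw [Finset.sum_add_distrib, sum_comp_symm, hq1, hz0, add_zero]
  · simp only [add_smul]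
    rw [Finset.sum_add_distrib, sum_smul_symm α v π hπ q, hq2, hq1, hzs, one_smul,
      hlin.map_add, hv]
    rw [show f β + (f γ + γ) + γ = f β + f γ + (γ + γ) by abel, bw_add_self, add_zero]
  · rw [hd_perm_add, hd]
  · funext j
    simp only [act, rword]
    by_cases h : p (π.symm j) = q (π.symm j)
    · rw [if_pos h, if_pos (by rw [h])]
      rfl
    · rw [if_neg h, if_neg (fun hc => h (add_right_cancel hc))]
      rfl

/- ---------- main theorem ---------- -/

/-- the automorphism group of `C_{H,f}` is transitive: for any
`x, y ∈ C_{H,f}` there is a coordinate permutation `π` and a binary vector `z` with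
`π(C_{H,f}) + z = C_{H,f}` and `π(x) + z = y`. -/
theorem stmt12 {m : ℕ} (hm : 2 ≤ m) (n : ℕ) (hn : n = 2 ^ m)
    (α : Fin n → BW m) (hα : Function.Bijective α)
    (f : BW m → BW m) (hlin : IsLinearMap (ZMod 2) f)
    (hf : Function.Bijective f) (hf1 : Function.Bijective (fun x => f x + x)) :
    ∀ x ∈ CHf α f, ∀ y ∈ CHf α f,
      ∃ (π : Equiv.Perm (Fin n)) (z : BW n),
        act π z '' CHf α f = CHf α f ∧ act π z x = y := by
  rintro x ⟨βx, p, q, ⟨hp1, hp2⟩, ⟨hq1, hq2⟩, hdx, rfl⟩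
  rintro y ⟨βy, p', q', ⟨hp'1, hp'2⟩, ⟨hq'1, hq'2⟩, hdy, rfl⟩
  classical
  -- extract the star positions
  obtain ⟨i, hi⟩ := Finset.card_eq_one.mp (by simpa [hammingDist] using hdx)
  obtain ⟨i', hi'⟩ := Finset.card_eq_one.mp (by simpa [hammingDist] using hdy)
  have hiff : ∀ j, p j ≠ q j ↔ j = i := by
    intro j
    rw [← Finset.mem_singleton, ← hi]
    simp
  have hiff' : ∀ j, p' j ≠ q' j ↔ j = i' := by
    intro j
    rw [← Finset.mem_singleton, ← hi']
    simp
  -- syndromes of star positions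
  have key : ∀ (a b : BW n) (k : Fin n), (∀ j, a j ≠ b j ↔ j = k) →
      (∑ j, a j • α j) + (∑ j, b j • α j) = α k := by
    intro a b k hk
    rw [← Finset.sum_add_distrib]
    simp only [← add_smul]
    rw [Finset.sum_eq_single k]
    · rw [z2_ne _ _ ((hk k).mpr rfl), one_smul]
    · intro j _ hj
      rw [z2_eq _ _ (not_not.mp (fun hne => hj ((hk j).mp hne))), zero_smul]
    · intro h
      exact absurd (Finset.mem_univ k) h
  have hαi : α i = βx + f βx := by
    rw [← key p q i hiff, hp2, hq2]
  have hαi' : α i' = βy + f βy := by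
    rw [← key p' q' i' hiff', hp'2, hq'2]
  -- the automorphism
  set γ : BW m := βy + βx with hγ
  set v : BW m := α i + α i' with hvdef
  have hv : v = f γ + γ := by
    rw [hvdef, hγ, hlin.map_add, hαi, hαi']
    abel
  let e : Fin n ≃ BW m := Equiv.ofBijective α hα
  let π : Equiv.Perm (Fin n) := (e.trans (Equiv.addRight v)).trans e.symm
  have hπ : ∀ k, α (π k) = α k + v := by
    intro k
    show α (e.symm (e k + v)) = α k + v
    have h : α (e.symm (e k + v)) = e (e.symm (e k + v)) := rfl
    rw [h, Equiv.apply_symm_apply]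
    rfl
  set z : BW n := fun j => p' j + p (π.symm j) with hz
  have hz0 : ∑ j, z j = 0 := by
    rw [hz]
    rw [Finset.sum_add_distrib, sum_comp_symm, hp'1, hp1, add_zero]
  have hzs : ∑ j, z j • α j = γ := by
    rw [hz]
    simp only [add_smul]
    rw [Finset.sum_add_distrib, sum_smul_symm α v π hπ p, hp2, hp1, hp'2, zero_smul,
      add_zero, hγ]
  have hπs := hπ_symm hπ
  refine ⟨π, z, ?_, ?_⟩
  · apply Set.Subset.antisymm
    · rintro c' ⟨w, hw, rfl⟩
      exact chf_closure α f hlin γ v hv π hπ z hz0 hzs w hw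
    · intro c hc
      refine ⟨act π.symm (fun j => z (π j)) c, ?_, act_act π z c⟩
      apply chf_closure α f hlin γ v hv π.symm hπs (fun j => z (π j)) ?_ ?_ c hc
      · rw [Equiv.sum_comp π z, hz0]
      · have h := sum_smul_symm α v π.symm hπs z
        simp only [Equiv.symm_symm] at h
        rw [h, hzs, hz0, zero_smul, add_zero]
  · have hπi : π i = i' := by
      apply hα.injective
      rw [hπ i, hvdef]
      funext t
      exact z2_aab _ _
    have hπsi : π.symm i' = i := by rw [← hπi, Equiv.symm_apply_apply]
    funext j
    simp only [act, rword]
    by_cases hj : j = i'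
    · rw [hj, hπsi, if_neg ((hiff i).mpr rfl), if_neg ((hiff' i').mpr rfl)]
      rfl
    · have hj2 : π.symm j ≠ i := by
        intro hc
        exact hj (by rw [← hπi, ← hc, Equiv.apply_symm_apply])
      rw [if_pos (not_not.mp (fun hne => hj2 ((hiff _).mp hne))),
        if_pos (not_not.mp (fun hne => hj ((hiff' _).mp hne)))]
      show some (p (π.symm j) + z j) = some (p' j)
      rw [hz]
      exact congrArg some (z2_abc _ _)
end

section
/- If a diameter perfect distance-4 code exists in X^n (i.e., a code of minimum distance 4 and cardinality n·2^{n-1}/(3n−2)), then 3n − 2 divides n·2^{n-1}; in particular n = (2^{2m}+2)/3 for some m. -/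
/-- if a diameter perfect distance-4 code exists in `X^n` (minimum distance
4 and cardinality `n·2^(n-1)/(3n-2)`), then `3n - 2` divides `n·2^(n-1)`; in particular
`n = (2^(2m) + 2)/3` for some `m`. -/
theorem stmt16 {n : ℕ} (C : Finset (TW n)) (hX : ∀ c ∈ C, isX c)
    (hC2 : 2 ≤ C.card)
    (hd : ∀ c ∈ C, ∀ c' ∈ C, c ≠ c' → 4 ≤ hammingDist c c')
    (hcard : C.card * (3 * n - 2) = n * 2 ^ (n - 1)) :
    (3 * n - 2) ∣ n * 2 ^ (n - 1) ∧ ∃ m : ℕ, 3 * n = 2 ^ (2 * m) + 2 := by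
  have hdvd : (3 * n - 2) ∣ n * 2 ^ (n - 1) := ⟨C.card, by rw [← hcard]; ring⟩
  refine ⟨hdvd, ?_⟩
  -- n ≥ 1 since C is nonempty and its elements have a `*` coordinate
  have hn : 1 ≤ n := by
    by_contra h
    interval_cases n
    obtain ⟨c, hc⟩ := Finset.card_pos.mp (by omega : 0 < C.card)
    have := hX c hc
    simp [isX] at this
  -- (3n-2) ∣ 2^n
  have h2 : (3 * n - 2) ∣ 2 ^ n := by
    have h3 : (3 * n - 2) ∣ 3 * n * 2 ^ (n - 1) := by
      have := hdvd.mul_left 3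
      simpa [mul_assoc] using this
    have hsub : 3 * n * 2 ^ (n - 1) - (3 * n - 2) * 2 ^ (n - 1) = 2 ^ n := by
      rw [← Nat.sub_mul]
      have : 3 * n - (3 * n - 2) = 2 := by omega
      rw [this]
      rw [← pow_succ']
      congr 1
      omega
    calc (3 * n - 2) ∣ 3 * n * 2 ^ (n - 1) - (3 * n - 2) * 2 ^ (n - 1) :=
          Nat.dvd_sub h3 (Dvd.intro _ rfl)
      _ = 2 ^ n := hsub
  obtain ⟨k, _, hk⟩ := (Nat.dvd_prime_pow Nat.prime_two).mp h2
  -- k must be even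
  rcases Nat.even_or_odd k with ⟨m, hm⟩ | ⟨m, hm⟩
  · exact ⟨m, by rw [two_mul, ← hm]; omega⟩
  · exfalso
    have h4 : 2 ^ k = 2 * 4 ^ m := by
      rw [hm, pow_succ, pow_mul]; ring
    have hmod : 4 ^ m % 3 = 1 := by
      rw [Nat.pow_mod]; simp
    omega
end

section
/- If C ⊆ X^n is a diameter perfect distance-4 code, then the partition {C_1, C_2} of {0,1}^n, where C_1 = { x ∈ {0,1}^n : d_H(x,C) = 1 } and C_2 is its complement, is an equitable partition (perfect coloring) of the hypercube graph with quotient matrix ((1, n−1), (n/2, n/2)): every vertex of C_1 has exactly 1 neighbor in C_1 and n−1 in C_2, and every vertex of C_2 has exactly n/2 neighbors in each part. -/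
/-!
A word `c ∈ X^n` with its `*` at position `p` is at distance 1 from exactly the two binary words
obtained by filling in the `*`, and these are adjacent in direction `p`. Since codewords are at
distance at least 4, the triangle inequality shows that a binary word is covered by at most one
codeword, and that a covered word has exactly one covered neighbour, its partner.

If `y` is uncovered and its neighbour in direction `i` is covered by `cᵢ`, then `cᵢ` differs from
`y` in exactly two positions, `i` and the `*` of `cᵢ`. Distinct directions give distinct codewords,
hence disjoint such pairs, so `y` has at most `n/2` covered neighbours.

Finally `C₁` has `2|C|` elements, each sending `n - 1` edges to `C₂`, and `|C|(3n-2) = n 2^(n-1)`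
says exactly that this number of edges is `|C₂| n/2`; so the bound `n/2` is attained at every
vertex of `C₂`.
-/

open Finset

theorem hammingDist_le_card_union {ι : Type*} [Fintype ι] [DecidableEq ι] {β : ι → Type*}
    [∀ i, DecidableEq (β i)] (u v w : ∀ i, β i) :
    hammingDist u w ≤ #(({i | v i ≠ u i} : Finset ι) ∪ ({i | v i ≠ w i} : Finset ι)) := by
  refine card_le_card fun i hi => ?_
  simp only [mem_filter, mem_univ, true_and, mem_union] at hi ⊢
  by_contra! h
  exact hi (h.1.symm.trans h.2)

namespace SimpleGraph

variable {V : Type*} [Fintype V] [DecidableEq V] (G : SimpleGraph V) [DecidableRel G.Adj]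

theorem card_adj_mem_add_card_adj_notMem (s : Finset V) (x : V) :
    #{y | G.Adj x y ∧ y ∈ s} + #{y | G.Adj x y ∧ y ∉ s} = G.degree x := by
  rw [← card_neighborFinset_eq_degree,
    ← card_filter_add_card_filter_not (s := G.neighborFinset x) (· ∈ s)]
  simp only [neighborFinset_eq_filter, filter_filter]

theorem mul_card_adj_mem_eq_of_le {s : Finset V} {a k m : ℕ}
    (hout : ∀ x ∈ s, #{y | G.Adj x y ∧ y ∉ s} = a)
    (hin : ∀ y ∉ s, k * #{x | G.Adj y x ∧ x ∈ s} ≤ m)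
    (hcount : k * (a * #s) = m * #sᶜ) {y : V} (hy : y ∉ s) :
    k * #{x | G.Adj y x ∧ x ∈ s} = m := by
  have hedges :
      ∑ x ∈ s, #{y | G.Adj x y ∧ y ∉ s} = ∑ y ∈ sᶜ, #{x | G.Adj y x ∧ x ∈ s} := by
    convert sum_card_bipartiteAbove_eq_sum_card_bipartiteBelow (s := s) (t := sᶜ) G.Adj
      using 3 with x _ y _
    · ext z; simp [and_comm]
    · ext z; simp [G.adj_comm z y, and_comm]
  have hsum : ∑ y ∈ sᶜ, k * #{x | G.Adj y x ∧ x ∈ s} = ∑ _y ∈ sᶜ, m := by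
    rw [← mul_sum, ← hedges, sum_congr rfl hout, sum_const, sum_const, smul_eq_mul,
      smul_eq_mul, mul_comm #s, hcount, mul_comm]
  exact (sum_eq_sum_iff_of_le fun y hy => hin y (by simpa using hy)).1 hsum y (by simpa using hy)

end SimpleGraph

namespace DiameterPerfect

variable {n : ℕ}

def hypercube (n : ℕ) : SimpleGraph (BW n) where
  Adj x y := hammingDist x y = 1
  symm := ⟨fun x y h => (hammingDist_comm y x).trans h⟩
  loopless := ⟨fun x h => by simp at h⟩

instance : DecidableRel (hypercube n).Adj := fun x y =>
  inferInstanceAs (Decidable (hammingDist x y = 1))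

theorem eq_add_one_of_ne {a b : ZMod 2} (h : a ≠ b) : a = b + 1 := by
  revert a b; decide

def flipBit (x : BW n) (i : Fin n) : BW n := Function.update x i (x i + 1)

theorem flipBit_apply_self (x : BW n) (i : Fin n) : flipBit x i i = x i + 1 := by
  simp [flipBit]

theorem flipBit_apply_of_ne (x : BW n) {i j : Fin n} (h : j ≠ i) : flipBit x i j = x j := by
  simp [flipBit, h]

theorem hammingDist_flipBit (x : BW n) (i : Fin n) : hammingDist x (flipBit x i) = 1 := by
  rw [hammingDist, card_eq_one]
  refine ⟨i, eq_singleton_iff_unique_mem.2 ⟨by simp [flipBit_apply_self], fun j hj => ?_⟩⟩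
  by_contra h
  simp [flipBit_apply_of_ne x h] at hj

theorem hammingDist_eq_one_iff {x y : BW n} : hammingDist x y = 1 ↔ ∃ i, y = flipBit x i := by
  refine ⟨fun h => ?_, by rintro ⟨i, rfl⟩; exact hammingDist_flipBit x i⟩
  obtain ⟨i, hi⟩ := card_eq_one.1 h
  refine ⟨i, funext fun j => ?_⟩
  have hj := Finset.ext_iff.1 hi j
  simp only [mem_filter, mem_univ, true_and, mem_singleton] at hj
  rcases eq_or_ne j i with rfl | hji
  · rw [flipBit_apply_self]
    exact eq_add_one_of_ne (Ne.symm (hj.2 rfl))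
  · rw [flipBit_apply_of_ne x hji]
    exact (not_not.1 (hj.not.2 hji)).symm

theorem flipBit_apply_self_ne (x : BW n) (i : Fin n) : flipBit x i i ≠ x i := by
  simp [flipBit_apply_self]

theorem flipBit_injective (x : BW n) : Function.Injective (flipBit x) := by
  intro i j h
  by_contra hij
  exact flipBit_apply_self_ne x i (congr_fun h i ▸ flipBit_apply_of_ne x hij)

theorem degree_hypercube (x : BW n) : (hypercube n).degree x = n := by
  have : (hypercube n).neighborFinset x = univ.image (flipBit x) := by
    ext y
    rw [SimpleGraph.mem_neighborFinset, mem_image]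
    exact hammingDist_eq_one_iff.trans (by simp only [mem_univ, true_and, eq_comm])
  rw [← SimpleGraph.card_neighborFinset_eq_degree, this,
    card_image_of_injective _ (flipBit_injective x), card_univ, Fintype.card_fin]

theorem ncard_hammingDist_eq_one_and_mem (x : BW n) (s : Finset (BW n)) :
    {y : BW n | hammingDist x y = 1 ∧ y ∈ (s : Set (BW n))}.ncard =
      #{y | (hypercube n).Adj x y ∧ y ∈ s} := by
  rw [← Set.ncard_coe_finset]
  congr 1
  ext y
  rw [mem_coe, mem_filter]
  simp [hypercube]

theorem card_adj_mem_eq_card_flipBit_mem (y : BW n) (s : Finset (BW n)) :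
    #{x | (hypercube n).Adj y x ∧ x ∈ s} = #{i | flipBit y i ∈ s} := by
  rw [← card_image_of_injective _ (flipBit_injective y)]
  congr 1
  ext x
  simp only [mem_filter, mem_univ, true_and, mem_image]
  constructor
  · rintro ⟨hyx, hx⟩
    obtain ⟨i, rfl⟩ := hammingDist_eq_one_iff.1 hyx
    exact ⟨i, hx, rfl⟩
  · rintro ⟨i, hi, rfl⟩
    exact ⟨hammingDist_flipBit y i, hi⟩

theorem hammingDist_emb (x y : BW n) : hammingDist (emb x) (emb y) = hammingDist x y :=
  hammingDist_comp (fun _ => some) fun _ => Option.some_injective _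

theorem exists_star {c : TW n} (hc : isX c) : ∃ p, ∀ i, c i = none ↔ i = p := by
  obtain ⟨p, hp⟩ := card_eq_one.1 hc
  exact ⟨p, fun i => by simpa using Finset.ext_iff.1 hp i⟩

section Star

variable {c : TW n} {p : Fin n} (hp : ∀ i, c i = none ↔ i = p)
include hp

theorem hammingDist_emb_eq_one_iff (x : BW n) :
    hammingDist (emb x) c = 1 ↔ ∀ i ≠ p, c i = some (x i) := by
  have hpmem : p ∈ ({i | emb x i ≠ c i} : Finset (Fin n)) := by
    rw [mem_filter]
    simp [emb, (hp p).2 rfl]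
  rw [hammingDist, card_eq_one]
  constructor
  · rintro ⟨q, hq⟩ i hip
    rw [hq, mem_singleton] at hpmem
    have : i ∉ ({i | emb x i ≠ c i} : Finset (Fin n)) := by simpa [hq, ← hpmem] using hip
    simpa [emb, eq_comm] using this
  · intro h
    refine ⟨p, eq_singleton_iff_unique_mem.2 ⟨hpmem, fun i hi => ?_⟩⟩
    by_contra hip
    rw [mem_filter, h i hip] at hi
    exact hi.2 rfl

theorem apply_eq_of_hammingDist_emb_eq_one {x y : BW n} (hx : hammingDist (emb x) c = 1)
    (hy : hammingDist (emb y) c = 1) {i : Fin n} (hi : i ≠ p) : x i = y i :=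
  Option.some_injective _ <|
    ((hammingDist_emb_eq_one_iff hp x).1 hx i hi).symm.trans
      ((hammingDist_emb_eq_one_iff hp y).1 hy i hi)

theorem card_filter_hammingDist_emb_eq_one : #{x | hammingDist (emb x) c = 1} = 2 := by
  let fill (a : ZMod 2) : BW n := fun i => if i = p then a else (c i).getD 0
  have hfill : ({x | hammingDist (emb x) c = 1} : Finset (BW n)) = univ.image fill := by
    ext x
    simp only [mem_filter, mem_univ, true_and, mem_image, hammingDist_emb_eq_one_iff hp]
    constructor
    · refine fun hx => ⟨x p, funext fun i => ?_⟩
      by_cases hip : i = p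
      · simp [fill, hip]
      · simp [fill, hip, hx i hip]
    · rintro ⟨a, rfl⟩ i hip
      simp [fill, hip, Option.getD_of_ne_none (mt (hp i).1 hip)]
  rw [hfill, card_image_of_injective _ fun a b hab => by simpa [fill] using congr_fun hab p]
  rfl

theorem apply_ne_of_hammingDist_emb_flipBit_eq_one {y : BW n} {i : Fin n}
    (hcov : hammingDist (emb (flipBit y i)) c = 1) : emb y i ≠ c i := by
  rcases eq_or_ne i p with rfl | hip
  · simp [emb, (hp i).2 rfl]
  · rw [(hammingDist_emb_eq_one_iff hp _).1 hcov i hip, emb, Ne, Option.some_inj]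
    exact (flipBit_apply_self_ne y i).symm

theorem hammingDist_emb_eq_two_of_flipBit {y : BW n} {i : Fin n}
    (hcov : hammingDist (emb (flipBit y i)) c = 1) (hy : hammingDist (emb y) c ≠ 1) :
    hammingDist (emb y) c = 2 := by
  have hpos : 0 < hammingDist (emb y) c :=
    hammingDist_pos.2 fun h => apply_ne_of_hammingDist_emb_flipBit_eq_one hp hcov (congr_fun h i)
  have := hammingDist_triangle (emb y) (emb (flipBit y i)) c
  rw [hammingDist_emb, hammingDist_flipBit, hcov] at this
  omega

theorem eq_of_hammingDist_emb_flipBit_eq_one {y : BW n} {i j : Fin n}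
    (hi : hammingDist (emb (flipBit y i)) c = 1) (hj : hammingDist (emb (flipBit y j)) c = 1) :
    i = j := by
  by_contra hij
  rcases eq_or_ne i p with rfl | hip
  · have := apply_eq_of_hammingDist_emb_eq_one hp hi hj (Ne.symm hij)
    rw [flipBit_apply_of_ne y (Ne.symm hij)] at this
    exact flipBit_apply_self_ne y j this.symm
  · have := apply_eq_of_hammingDist_emb_eq_one hp hi hj hip
    rw [flipBit_apply_of_ne y hij] at this
    exact flipBit_apply_self_ne y i this

end Star

def coveredSet (C : Finset (TW n)) : Finset (BW n) := {x | ∃ c ∈ C, hammingDist (emb x) c = 1}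

section Code

variable {C : Finset (TW n)} (hX : ∀ c ∈ C, isX c)
  (hd : ∀ c ∈ C, ∀ c' ∈ C, c ≠ c' → 4 ≤ hammingDist c c')

theorem mem_coveredSet {x : BW n} : x ∈ coveredSet C ↔ ∃ c ∈ C, hammingDist (emb x) c = 1 := by
  simp [coveredSet]

include hd in
theorem eq_of_hammingDist_emb_eq_one {c c' : TW n} (hc : c ∈ C) (hc' : c' ∈ C) {x x' : BW n}
    (hx : hammingDist (emb x) c = 1) (hx' : hammingDist (emb x') c' = 1)
    (hxx' : hammingDist x x' ≤ 1) : c = c' := by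
  by_contra hne
  have : hammingDist c c' ≤ 3 := calc
    hammingDist c c' ≤ hammingDist c (emb x) + hammingDist (emb x) c' :=
      hammingDist_triangle _ _ _
    _ ≤ hammingDist (emb x) c + (hammingDist (emb x) (emb x') + hammingDist (emb x') c') := by
      rw [hammingDist_comm c]
      gcongr
      exact hammingDist_triangle _ _ _
    _ ≤ 3 := by rw [hammingDist_emb]; omega
  exact absurd (hd c hc c' hc' hne) (by omega)

include hX hd

theorem card_coveredSet : #(coveredSet C) = 2 * #C := by
  have : coveredSet C = C.biUnion fun c => {x | hammingDist (emb x) c = 1} := by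
    ext x
    simp [mem_coveredSet]
  rw [this, card_biUnion, sum_congr rfl fun c hc => ?_, sum_const, smul_eq_mul, mul_comm]
  · obtain ⟨p, hp⟩ := exists_star (hX c hc)
    exact card_filter_hammingDist_emb_eq_one hp
  · intro c hc c' hc' hne
    refine disjoint_left.2 fun x hxc hxc' => hne ?_
    rw [mem_filter] at hxc hxc'
    exact eq_of_hammingDist_emb_eq_one hd hc hc' hxc.2 hxc'.2 (by simp)

theorem card_adj_mem_coveredSet_of_mem {x : BW n} (hx : x ∈ coveredSet C) :
    #{y | (hypercube n).Adj x y ∧ y ∈ coveredSet C} = 1 := by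
  obtain ⟨c, hc, hxc⟩ := mem_coveredSet.1 hx
  obtain ⟨p, hp⟩ := exists_star (hX c hc)
  rw [card_eq_one]
  refine ⟨flipBit x p, ext fun y => ?_⟩
  simp only [mem_filter, mem_univ, true_and, mem_singleton]
  constructor
  · rintro ⟨hxy, hy⟩
    obtain ⟨i, rfl⟩ := hammingDist_eq_one_iff.1 hxy
    obtain ⟨c', hc', hyc'⟩ := mem_coveredSet.1 hy
    obtain rfl := eq_of_hammingDist_emb_eq_one hd hc' hc hyc' hxc
      (by rw [hammingDist_comm]; exact hxy.le)
    by_contra hip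
    exact flipBit_apply_self_ne x i <|
      apply_eq_of_hammingDist_emb_eq_one hp hyc' hxc fun h => hip (h ▸ rfl)
  · rintro rfl
    refine ⟨hammingDist_flipBit x p, mem_coveredSet.2 ⟨c, hc, ?_⟩⟩
    refine (hammingDist_emb_eq_one_iff hp _).2 fun i hi => ?_
    rw [flipBit_apply_of_ne x hi]
    exact (hammingDist_emb_eq_one_iff hp x).1 hxc i hi

theorem card_adj_notMem_coveredSet_of_mem {x : BW n} (hx : x ∈ coveredSet C) :
    #{y | (hypercube n).Adj x y ∧ y ∉ coveredSet C} = n - 1 := by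
  have hdeg := (hypercube n).card_adj_mem_add_card_adj_notMem (coveredSet C) x
  rw [degree_hypercube, card_adj_mem_coveredSet_of_mem hX hd hx] at hdeg
  omega

theorem two_mul_card_adj_mem_coveredSet_le {y : BW n} (hy : y ∉ coveredSet C) :
    2 * #{x | (hypercube n).Adj y x ∧ x ∈ coveredSet C} ≤ n := by
  rw [card_adj_mem_eq_card_flipBit_mem]
  set S : Finset (Fin n) := {i | flipBit y i ∈ coveredSet C}
  have : ∀ i ∈ S, ∃ c ∈ C, hammingDist (emb (flipBit y i)) c = 1 := fun i hi =>
    mem_coveredSet.1 (mem_filter.1 hi).2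
  choose! c hcC hcov using this
  have hstar : ∀ i ∈ S, ∃ p, ∀ k, c i k = none ↔ k = p := fun i hi =>
    exists_star (hX _ (hcC i hi))
  set T : Fin n → Finset (Fin n) := fun i => {k | emb y k ≠ c i k}
  have hT : ∀ i ∈ S, #(T i) = 2 := fun i hi => by
    obtain ⟨p, hp⟩ := hstar i hi
    exact hammingDist_emb_eq_two_of_flipBit hp (hcov i hi)
      fun h => hy (mem_coveredSet.2 ⟨_, hcC i hi, h⟩)
  have hdisj : (S : Set (Fin n)).PairwiseDisjoint T := by
    intro i hi j hj hij
    have hne : c i ≠ c j := fun h => by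
      obtain ⟨p, hp⟩ := hstar i hi
      exact hij (eq_of_hammingDist_emb_flipBit_eq_one hp (hcov i hi) (h ▸ hcov j hj))
    -- the distinct codewords `c i`, `c j` differ in at least 4 places, all inside `T i ∪ T j`
    have h4 := hd _ (hcC i hi) _ (hcC j hj) hne
    have hU : hammingDist (c i) (c j) ≤ #(T i ∪ T j) := hammingDist_le_card_union _ (emb y) _
    have hUI := card_union_add_card_inter (T i) (T j)
    rw [hT i hi, hT j hj] at hUI
    rw [Function.onFun, disjoint_iff_inter_eq_empty, ← card_eq_zero]
    omega
  calc 2 * #S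
      = ∑ i ∈ S, #(T i) := by rw [sum_congr rfl hT, sum_const, smul_eq_mul, mul_comm]
    _ = #(S.biUnion T) := (card_biUnion hdisj).symm
    _ ≤ n := (card_le_univ _).trans_eq (Fintype.card_fin n)

theorem two_mul_sub_one_mul_card_coveredSet (hcard : #C * (3 * n - 2) = n * 2 ^ (n - 1)) :
    2 * ((n - 1) * #(coveredSet C)) = n * #(coveredSet C)ᶜ := by
  rcases n with _ | m
  · simp
  have hD := card_coveredSet hX hd
  have hsum : #(coveredSet C) + #(coveredSet C)ᶜ = 2 * 2 ^ m := by
    rw [card_add_card_compl]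
    simp [pow_succ, mul_comm]
  rw [show 3 * (m + 1) - 2 = 3 * m + 1 by omega, Nat.add_sub_cancel] at hcard
  rw [Nat.add_sub_cancel]
  zify at hcard hsum hD ⊢
  linear_combination 2 * hcard - (m + 1) * hsum + (3 * m + 1) * hD

end Code

end DiameterPerfect

open DiameterPerfect in
theorem stmt17_general {n : ℕ} (C : Finset (TW n)) (hX : ∀ c ∈ C, isX c)
    (hd : ∀ c ∈ C, ∀ c' ∈ C, c ≠ c' → 4 ≤ hammingDist c c')
    (hcard : C.card * (3 * n - 2) = n * 2 ^ (n - 1)) :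
    let C1 : Set (BW n) := {x | ∃ c ∈ C, hammingDist (emb x) c = 1}
    let C2 : Set (BW n) := C1ᶜ
    (∀ x ∈ C1,
      Set.ncard {y : BW n | hammingDist x y = 1 ∧ y ∈ C1} = 1 ∧
      Set.ncard {y : BW n | hammingDist x y = 1 ∧ y ∈ C2} = n - 1) ∧
    (∀ x ∈ C2,
      2 * Set.ncard {y : BW n | hammingDist x y = 1 ∧ y ∈ C1} = n ∧
      2 * Set.ncard {y : BW n | hammingDist x y = 1 ∧ y ∈ C2} = n) := by
  intro C1 C2
  have hC1 : C1 = coveredSet C := by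
    ext x
    simp [C1, mem_coveredSet]
  have hC2 : C2 = ↑(coveredSet C)ᶜ := by rw [coe_compl, ← hC1]
  simp only [hC2, hC1, ncard_hammingDist_eq_one_and_mem]
  simp only [mem_coe, mem_compl]
  refine ⟨fun x hx => ⟨card_adj_mem_coveredSet_of_mem hX hd hx,
    card_adj_notMem_coveredSet_of_mem hX hd hx⟩, fun y hy => ?_⟩
  have hin := (hypercube n).mul_card_adj_mem_eq_of_le
    (fun x hx => card_adj_notMem_coveredSet_of_mem hX hd hx)
    (fun y hy => two_mul_card_adj_mem_coveredSet_le hX hd hy)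
    (two_mul_sub_one_mul_card_coveredSet hX hd hcard) hy
  have hdeg := (hypercube n).card_adj_mem_add_card_adj_notMem (coveredSet C) y
  rw [degree_hypercube] at hdeg
  exact ⟨hin, by omega⟩

/-- if `C ⊆ X^n` is a diameter perfect distance-4 code (minimum distance 4,
cardinality `n·2^(n-1)/(3n-2)`), then `{C₁, C₂}`, where `C₁` is the set of binary words at
distance 1 from `C` and `C₂` its complement, is an equitable partition of the hypercube
with quotient matrix `((1, n-1), (n/2, n/2))`. -/
theorem stmt17 {n : ℕ} (C : Finset (TW n)) (hX : ∀ c ∈ C, isX c)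
    (hC2 : 2 ≤ C.card)
    (hd : ∀ c ∈ C, ∀ c' ∈ C, c ≠ c' → 4 ≤ hammingDist c c')
    (hcard : C.card * (3 * n - 2) = n * 2 ^ (n - 1)) :
    let C1 : Set (BW n) := {x | ∃ c ∈ C, hammingDist (emb x) c = 1}
    let C2 : Set (BW n) := C1ᶜ
    (∀ x ∈ C1,
      Set.ncard {y : BW n | hammingDist x y = 1 ∧ y ∈ C1} = 1 ∧
      Set.ncard {y : BW n | hammingDist x y = 1 ∧ y ∈ C2} = n - 1) ∧
    (∀ x ∈ C2,
      2 * Set.ncard {y : BW n | hammingDist x y = 1 ∧ y ∈ C1} = n ∧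
      2 * Set.ncard {y : BW n | hammingDist x y = 1 ∧ y ∈ C2} = n) :=
  stmt17_general C hX hd hcard
end
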